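/- arXiv:math/0112163 — 6 statements merged into one kernel-verified Lean document; each statement's English description precedes it below -/
import Mathlib

section
/- Let V : ℝ → ℝ be smooth, 2π-periodic, and Morse in the sense that V′(y) = 0 implies V″(y) ≠ 0. Let γ = (y, ν, μ) : ℝ → ℝ³ be an integral curve of W defined on all of ℝ with p∘γ ≡ λ. Then there exist real numbers y₊, y₋ with V′(y₊) = V′(y₋) = 0 and ν₊, ν₋ with ν₊² = λ − V(y₊) and ν₋² = λ − V(y₋), ν₋ ≤ ν₊, such that as t → +∞ one has μ(t) → 0, ν(t) → ν₊, and y(t) converges to y₊ in the circle ℝ/2πℤ, and similarly as t → −∞ with y₋, ν₋. That is, every maximally extended bicharacteristic tends, in each time direction, to a radial point of the flow. -/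
open Filter Topology Set

lemma periodic_bound {f : ℝ → ℝ} (hf : Continuous f) {p : ℝ} (hp : 0 < p)
    (hper : Function.Periodic f p) : ∃ B, 0 ≤ B ∧ ∀ x, |f x| ≤ B := by
  obtain ⟨x₀, _, hx₀⟩ := (isCompact_Icc (a := (0:ℝ)) (b := p)).exists_isMaxOn
    ⟨0, le_refl 0, hp.le⟩ (hf.abs.continuousOn)
  refine ⟨|f x₀|, abs_nonneg _, fun x => ?_⟩
  have hmem : toIcoMod hp 0 x ∈ Set.Icc 0 p := by
    have := toIcoMod_mem_Ico hp 0 x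
    simpa using Set.Ico_subset_Icc_self (by simpa using this)
  have heq : f (toIcoMod hp 0 x) = f x := by
    rw [← self_sub_toIcoDiv_zsmul hp 0 x, zsmul_eq_mul]
    exact hper.sub_int_mul_eq _
  have := hx₀ hmem
  simpa [heq] using this

lemma isolated_zero {g : ℝ → ℝ} {z g' : ℝ} (hg : HasDerivAt g g' z) (h0 : g z = 0)
    (h1 : g' ≠ 0) : ∃ ρ > 0, ∀ w, w ≠ z → |w - z| ≤ ρ → g w ≠ 0 := by
  have hs := hasDerivAt_iff_tendsto_slope.mp hg
  have hev : ∀ᶠ w in 𝓝[≠] z, |g'| / 2 < |slope g z w| := by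
    have : Tendsto (fun w => |slope g z w|) (𝓝[≠] z) (𝓝 |g'|) := hs.abs
    exact this.eventually_const_lt (by simpa using half_lt_self (abs_pos.mpr h1))
  obtain ⟨ε, hε, hball⟩ := Metric.mem_nhdsWithin_iff.mp hev
  refine ⟨ε / 2, by positivity, fun w hw hwz hgw => ?_⟩
  have hd : w ∈ Metric.ball z ε := by
    rw [Metric.mem_ball, Real.dist_eq]; linarith [hwz]
  have hlt := hball ⟨hd, hw⟩
  simp only [Set.mem_setOf_eq, slope_def_field, h0, hgw] at hlt
  simp at hlt
  linarith [abs_nonneg g', hlt]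

lemma circle_dist (p : ℝ) [Fact (0 < p)] (a b : ℝ) :
    |a - b - round (p⁻¹ * (a - b)) * p| = dist (a : AddCircle p) (b : AddCircle p) := by
  rw [dist_eq_norm]
  rw [← AddCircle.coe_sub, AddCircle.norm_eq]

set_option maxHeartbeats 2000000 in
lemma aux_conv (V : ℝ → ℝ) (hV : ContDiff ℝ (⊤ : ℕ∞) V)
    (hper : Function.Periodic V (2 * Real.pi))
    (hMorse : ∀ y : ℝ, deriv V y = 0 → deriv (deriv V) y ≠ 0)
    (lam : ℝ) (y ν μ : ℝ → ℝ)
    (hy : ∀ t, HasDerivAt y (2 * μ t) t)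
    (hν : ∀ t, HasDerivAt ν (2 * μ t ^ 2) t)
    (hμ : ∀ t, HasDerivAt μ (-(deriv V (y t) + 2 * ν t * μ t)) t)
    (henergy : ∀ t, ν t ^ 2 + μ t ^ 2 + V (y t) = lam) :
    ∃ yp νp : ℝ, deriv V yp = 0 ∧ νp ^ 2 = lam - V yp ∧
      Filter.Tendsto μ Filter.atTop (nhds 0) ∧
      Filter.Tendsto ν Filter.atTop (nhds νp) ∧
      Filter.Tendsto (fun t => (y t : AddCircle (2 * Real.pi))) Filter.atTop
        (nhds (yp : AddCircle (2 * Real.pi))) := by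
  have hπ : (0:ℝ) < 2 * Real.pi := by positivity
  haveI : Fact ((0:ℝ) < 2 * Real.pi) := ⟨hπ⟩
  set p : ℝ := 2 * Real.pi with hp
  -- smoothness consequences
  have hV' : ContDiff ℝ ((⊤:ℕ∞):WithTop ℕ∞) V := hV.of_le (by simp)
  have hV1 : ContDiff ℝ ((⊤:ℕ∞):WithTop ℕ∞) (deriv V) := (contDiff_infty_iff_deriv.mp hV').2
  have hVd : Differentiable ℝ V := (contDiff_infty_iff_deriv.mp hV').1
  have hV1d : Differentiable ℝ (deriv V) := (contDiff_infty_iff_deriv.mp hV1).1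
  have hVc : Continuous V := hVd.continuous
  have hV1c : Continuous (deriv V) := hV1d.continuous
  have hV2c : Continuous (deriv (deriv V)) :=
    ((contDiff_infty_iff_deriv.mp hV1).2.differentiable (by simp)).continuous
  -- periodicity of derivatives
  have hperd : ∀ (f : ℝ → ℝ), Function.Periodic f p → Function.Periodic (deriv f) p := by
    intro f hf x
    have h1 : (fun x => f (x + p)) = f := funext hf
    calc deriv f (x + p) = deriv (fun x => f (x + p)) x := (deriv_comp_add_const f p x).symm
    _ = deriv f x := by rw [h1]
  have hper1 : Function.Periodic (deriv V) p := hperd V hper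
  have hper2 : Function.Periodic (deriv (deriv V)) p := hperd _ hper1
  -- bounds
  obtain ⟨B, hB0, hB⟩ := periodic_bound hVc hπ hper
  obtain ⟨B1, hB10, hB1⟩ := periodic_bound hV1c hπ hper1
  obtain ⟨B2, hB20, hB2⟩ := periodic_bound hV2c hπ hper2
  set R : ℝ := Real.sqrt (lam + B) with hR
  have hR0 : 0 ≤ R := Real.sqrt_nonneg _
  have hνR : ∀ t, |ν t| ≤ R := by
    intro t
    rw [hR, ← Real.sqrt_sq_eq_abs]
    apply Real.sqrt_le_sqrt
    nlinarith [henergy t, abs_le.mp (hB (y t)), sq_nonneg (μ t)]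
  have hμR : ∀ t, |μ t| ≤ R := by
    intro t
    rw [hR, ← Real.sqrt_sq_eq_abs]
    apply Real.sqrt_le_sqrt
    nlinarith [henergy t, abs_le.mp (hB (y t)), sq_nonneg (ν t)]
  -- continuity of solutions
  have hyc : Continuous y := continuous_iff_continuousAt.mpr fun t => (hy t).continuousAt
  have hνc : Continuous ν := continuous_iff_continuousAt.mpr fun t => (hν t).continuousAt
  have hμc : Continuous μ := continuous_iff_continuousAt.mpr fun t => (hμ t).continuousAt
  -- monotonicity and convergence of ν
  have hmono : Monotone ν := by
    apply monotone_of_deriv_nonneg (fun t => (hν t).differentiableAt)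
    intro t; rw [(hν t).deriv]; positivity
  have hbdd : BddAbove (Set.range ν) := ⟨R, by rintro v ⟨t, rfl⟩; exact (abs_le.mp (hνR t)).2⟩
  set νp : ℝ := ⨆ t, ν t with hνpdef
  have hνp : Tendsto ν atTop (𝓝 νp) := tendsto_atTop_ciSup hmono hbdd
  have hνple : ∀ t, ν t ≤ νp := fun t => le_ciSup hbdd t
  -- Lipschitz estimates
  have lip : ∀ (g g' : ℝ → ℝ) (C : ℝ), (∀ t, HasDerivAt g (g' t) t) → (∀ t, |g' t| ≤ C) →
      ∀ s t : ℝ, |g s - g t| ≤ C * |s - t| := by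
    intro g g' C hg hgC s t
    have := Convex.norm_image_sub_le_of_norm_deriv_le (𝕜 := ℝ) (f := g) (s := Set.univ)
      (fun x _ => (hg x).differentiableAt) (fun x _ => by rw [(hg x).deriv]; simpa using hgC x)
      convex_univ (Set.mem_univ t) (Set.mem_univ s)
    simpa [Real.norm_eq_abs] using this
  have hμlip : ∀ s t : ℝ, |μ s - μ t| ≤ (B1 + 2 * R * R) * |s - t| := by
    apply lip _ _ _ hμ
    intro t
    have h1 : |2 * ν t * μ t| ≤ 2 * R * R := by
      rw [abs_mul, abs_mul]
      simp only [abs_two]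
      have := hνR t; have := hμR t
      have h2 : |2| * |ν t| * |μ t| ≤ 2 * R * R := by
        rw [abs_two]
        nlinarith [abs_nonneg (ν t), abs_nonneg (μ t)]
      simpa using h2
    calc |(-(deriv V (y t) + 2 * ν t * μ t))| = |deriv V (y t) + 2 * ν t * μ t| := abs_neg _
    _ ≤ |deriv V (y t)| + |2 * ν t * μ t| := abs_add_le _ _
    _ ≤ B1 + 2 * R * R := add_le_add (hB1 _) h1
  -- FTC
  have ftc : ∀ (g g' : ℝ → ℝ), (∀ t, HasDerivAt g (g' t) t) → Continuous g' →
      ∀ a b : ℝ, g b - g a = ∫ s in a..b, g' s := by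
    intro g g' hg hg' a b
    exact (intervalIntegral.integral_eq_sub_of_hasDerivAt (fun s _ => hg s)
      ((hg'.intervalIntegrable a b))).symm
  have hμ'c : Continuous (fun t => -(deriv V (y t) + 2 * ν t * μ t)) :=
    ((hV1c.comp hyc).add ((continuous_const.mul hνc).mul hμc)).neg
  have hν'c : Continuous (fun t => 2 * μ t ^ 2) := continuous_const.mul (hμc.pow 2)
  -- μ → 0 (Barbălat)
  have hμ0 : Tendsto μ atTop (𝓝 0) := by
    rw [Metric.tendsto_atTop]
    intro ε hε
    set C : ℝ := B1 + 2 * R * R with hC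
    have hC0 : 0 ≤ C := by positivity
    set δ : ℝ := ε / (2 * (C + 1)) with hδ
    have hδ0 : 0 < δ := by positivity
    obtain ⟨T, hT⟩ := (Metric.tendsto_atTop.mp hνp) (δ * ε ^ 2 / 2) (by positivity)
    refine ⟨T, fun t ht => ?_⟩
    rw [Real.dist_eq, sub_zero]
    by_contra hcon
    push_neg at hcon
    have hδε : δ * (2 * (C + 1)) = ε := by rw [hδ]; field_simp
    have hmid : ∀ s ∈ Set.Icc t (t + δ), ε / 2 ≤ |μ s| := by
      intro s hs
      have h1 : |μ s - μ t| ≤ C * |s - t| := hμlip s t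
      have h2 : |s - t| ≤ δ := by
        rw [abs_of_nonneg (by linarith [hs.1])]; linarith [hs.2]
      have h3 : C * |s - t| ≤ C * δ := mul_le_mul_of_nonneg_left h2 hC0
      have h4 : C * δ ≤ ε / 2 := by nlinarith [hδ0.le]
      have h5 := abs_sub_abs_le_abs_sub (μ t) (μ s)
      have h6 : |μ t - μ s| = |μ s - μ t| := abs_sub_comm _ _
      linarith
    have hint : δ * (ε ^ 2 / 2) ≤ ν (t + δ) - ν t := by
      rw [ftc ν _ hν hν'c t (t + δ)]
      have hmono2 : ∫ _s in t..(t + δ), (ε ^ 2 / 2) ≤ ∫ s in t..(t + δ), 2 * μ s ^ 2 := by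
        apply intervalIntegral.integral_mono_on (by linarith) intervalIntegrable_const
          (hν'c.intervalIntegrable _ _)
        intro s hs
        have h7 := hmid s hs
        have h8 : (ε / 2) ^ 2 ≤ |μ s| ^ 2 := by
          nlinarith [abs_nonneg (μ s)]
        rw [sq_abs] at h8
        nlinarith
      rw [intervalIntegral.integral_const, smul_eq_mul] at hmono2
      have h9 : t + δ - t = δ := by ring
      rw [h9] at hmono2
      linarith
    have h10 := hT t ht
    rw [Real.dist_eq] at h10
    have h11 := hνple (t + δ)
    have h12 := abs_lt.mp h10
    nlinarith [hδ0, hε]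
  -- deriv V (y t) → 0
  have hgrad0 : Tendsto (fun t => deriv V (y t)) atTop (𝓝 0) := by
    rw [Metric.tendsto_atTop]
    by_contra hcon
    push_neg at hcon
    obtain ⟨ε, hε, hcon⟩ := hcon
    set δ : ℝ := ε / (8 * (B2 * R + 1)) with hδ
    have hδ0 : 0 < δ := by positivity
    have hδε : δ * (8 * (B2 * R + 1)) = ε := by rw [hδ]; field_simp
    have hylip : ∀ s t : ℝ, |y s - y t| ≤ (2 * R) * |s - t| := by
      apply lip _ _ _ hy
      intro t
      rw [abs_mul, abs_two]
      nlinarith [hμR t, abs_nonneg (μ t)]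
    have hV'lip : ∀ a b : ℝ, |deriv V a - deriv V b| ≤ B2 * |a - b| := by
      have := lip (deriv V) (deriv (deriv V)) B2 (fun x => (hV1d x).hasDerivAt) hB2
      exact fun a b => this a b
    set εμ : ℝ := min (ε / (8 * (R + 1))) (ε * δ / 8) with hεμ
    have hεμ0 : 0 < εμ := lt_min (by positivity) (by positivity)
    obtain ⟨T, hT⟩ := Metric.tendsto_atTop.mp hμ0 εμ hεμ0
    obtain ⟨t, htT, htε⟩ := hcon T
    rw [Real.dist_eq, sub_zero] at htε
    have hVs : ∀ s ∈ Set.Icc t (t + δ), |deriv V (y s) - deriv V (y t)| ≤ ε / 4 := by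
      intro s hs
      have h1 := hV'lip (y s) (y t)
      have h2 := hylip s t
      have h3 : |s - t| ≤ δ := by rw [abs_of_nonneg (by linarith [hs.1])]; linarith [hs.2]
      have h4 : B2 * (2 * R * δ) ≤ ε / 4 := by nlinarith [hδ0.le, hB20, hR0]
      have h5 : B2 * |y s - y t| ≤ B2 * ((2 * R) * δ) := by
        apply mul_le_mul_of_nonneg_left _ hB20
        calc |y s - y t| ≤ (2 * R) * |s - t| := h2
        _ ≤ (2 * R) * δ := mul_le_mul_of_nonneg_left h3 (by positivity)
      linarith
    have hνμs : ∀ s ∈ Set.Icc t (t + δ), |2 * ν s * μ s| ≤ ε / 4 := by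
      intro s hs
      have h1 : |μ s| < εμ := by
        have := hT s (le_trans htT hs.1)
        rwa [Real.dist_eq, sub_zero] at this
      have h2 : εμ ≤ ε / (8 * (R + 1)) := min_le_left _ _
      have h3 := hνR s
      have hkey : ε / (8 * (R + 1)) * (8 * (R + 1)) = ε := by field_simp
      have ha0 : 0 ≤ ε / (8 * (R + 1)) := by positivity
      rw [abs_mul, abs_mul, abs_two]
      have s1 : 2 * |ν s| * |μ s| ≤ 2 * R * |μ s| := by
        nlinarith [mul_nonneg (sub_nonneg.mpr h3) (abs_nonneg (μ s))]
      have s2 : 2 * R * |μ s| ≤ 2 * R * (ε / (8 * (R + 1))) :=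
        mul_le_mul_of_nonneg_left (le_trans h1.le h2) (by positivity)
      have s3 : 2 * R * (ε / (8 * (R + 1))) ≤ ε / 4 := by linarith [mul_nonneg ha0 hR0]
      linarith
    have hend1 : |μ t| < εμ := by
      have := hT t htT; rwa [Real.dist_eq, sub_zero] at this
    have hend2 : |μ (t + δ)| < εμ := by
      have := hT (t + δ) (by linarith); rwa [Real.dist_eq, sub_zero] at this
    have hεμ2 : εμ ≤ ε * δ / 8 := min_le_right _ _
    have hftcμ : μ (t + δ) - μ t = ∫ s in t..(t + δ), -(deriv V (y s) + 2 * ν s * μ s) :=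
      ftc μ _ hμ hμ'c t (t + δ)
    rcases le_or_gt 0 (deriv V (y t)) with hsign | hsign
    · -- deriv V (y t) ≥ ε
      have hVt : ε ≤ deriv V (y t) := by rwa [abs_of_nonneg hsign] at htε
      have hptwise : ∀ s ∈ Set.Icc t (t + δ),
          -(deriv V (y s) + 2 * ν s * μ s) ≤ -(ε / 2) := by
        intro s hs
        have h1 := abs_le.mp (hVs s hs)
        have h2 := abs_le.mp (hνμs s hs)
        linarith
      have hintle : ∫ s in t..(t + δ), -(deriv V (y s) + 2 * ν s * μ s) ≤
          ∫ _s in t..(t + δ), (-(ε / 2)) := by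
        apply intervalIntegral.integral_mono_on (by linarith) (hμ'c.intervalIntegrable _ _)
          intervalIntegrable_const hptwise
      rw [intervalIntegral.integral_const, smul_eq_mul] at hintle
      have h9 : t + δ - t = δ := by ring
      rw [h9] at hintle
      have habs1 := abs_lt.mp hend1
      have habs2 := abs_lt.mp hend2
      nlinarith [hε, hδ0]
    · -- deriv V (y t) ≤ -ε
      have hVt : deriv V (y t) ≤ -ε := by
        rw [abs_of_neg hsign] at htε; linarith
      have hptwise : ∀ s ∈ Set.Icc t (t + δ),
          (ε / 2) ≤ -(deriv V (y s) + 2 * ν s * μ s) := by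
        intro s hs
        have h1 := abs_le.mp (hVs s hs)
        have h2 := abs_le.mp (hνμs s hs)
        linarith
      have hintle : ∫ _s in t..(t + δ), (ε / 2) ≤
          ∫ s in t..(t + δ), -(deriv V (y s) + 2 * ν s * μ s) := by
        apply intervalIntegral.integral_mono_on (by linarith) intervalIntegrable_const
          (hμ'c.intervalIntegrable _ _) hptwise
      rw [intervalIntegral.integral_const, smul_eq_mul] at hintle
      have h9 : t + δ - t = δ := by ring
      rw [h9] at hintle
      have habs1 := abs_lt.mp hend1
      have habs2 := abs_lt.mp hend2
      nlinarith [hε, hδ0]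
  -- cluster point on the circle
  obtain ⟨zb, hzb⟩ := exists_clusterPt_of_compactSpace
    (Filter.map (fun t => ((y t : ℝ) : AddCircle p)) atTop)
  obtain ⟨z, rfl⟩ := QuotientAddGroup.mk_surjective zb
  have hclust : ∀ s ∈ 𝓝 ((z : ℝ) : AddCircle p), ∃ᶠ t in atTop, ((y t : ℝ) : AddCircle p) ∈ s :=
    mapClusterPt_iff_frequently.mp hzb
  -- representatives
  set w : ℝ → ℝ := fun t => y t - round (p⁻¹ * (y t - z)) * p with hwdef
  have hwd : ∀ t, |w t - z| = dist ((y t : ℝ) : AddCircle p) ((z : ℝ) : AddCircle p) := by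
    intro t
    rw [← circle_dist p (y t) z, hwdef]
    ring_nf
  have hwV : ∀ t, V (w t) = V (y t) := fun t => hper.sub_int_mul_eq _
  have hwV1 : ∀ t, deriv V (w t) = deriv V (y t) := fun t => hper1.sub_int_mul_eq _
  -- V'(z) = 0
  have hz0 : deriv V z = 0 := by
    by_contra h0
    have hε : 0 < |deriv V z| / 2 := by positivity
    obtain ⟨δ, hδ0, hδ⟩ := Metric.continuousAt_iff.mp (hV1c.continuousAt (x := z))
      (|deriv V z| / 2) hε
    obtain ⟨T, hT⟩ := Metric.tendsto_atTop.mp hgrad0 (|deriv V z| / 2) hε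
    have hball : Metric.ball ((z : ℝ) : AddCircle p) δ ∈ 𝓝 ((z : ℝ) : AddCircle p) :=
      Metric.ball_mem_nhds _ hδ0
    obtain ⟨t, htmem, htT⟩ := ((hclust _ hball).and_eventually (eventually_ge_atTop T)).exists
    rw [Metric.mem_ball] at htmem
    have h1 : dist (w t) z < δ := by rw [Real.dist_eq, hwd t]; exact htmem
    have h2 := hδ h1
    rw [Real.dist_eq, hwV1 t] at h2
    have h3 := hT t htT
    rw [Real.dist_eq, sub_zero] at h3
    have h8 := abs_lt.mp h3
    rcases abs_lt.mp h2 with ⟨ha, hb⟩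
    cases' abs_cases (deriv V z) with hc hc <;> linarith [hc.1, hc.2, h8.1, h8.2]
  -- isolation radius
  obtain ⟨ρ, hρ0, hρ⟩ := isolated_zero (hV1d z).hasDerivAt hz0 (hMorse z hz0)
  -- convergence of y on the circle
  have hycirc : Tendsto (fun t => ((y t : ℝ) : AddCircle p)) atTop (𝓝 ((z : ℝ) : AddCircle p)) := by
    rw [Metric.tendsto_atTop]
    intro ε hε
    set r : ℝ := min (ε / 2) ρ with hr
    have hr0 : 0 < r := lt_min (by positivity) hρ0
    have hrρ : r ≤ ρ := min_le_right _ _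
    set A : Set ℝ := Set.Icc (z - ρ) (z + ρ) ∩ {u | r ≤ |u - z|} with hA
    have hAcomp : IsCompact A := isCompact_Icc.inter_right
      (isClosed_le continuous_const (continuous_id.sub continuous_const).abs)
    have hAne : A.Nonempty := by
      refine ⟨z + r, ⟨⟨by linarith, by linarith⟩, ?_⟩⟩
      simp only [Set.mem_setOf_eq, add_sub_cancel_left, abs_of_nonneg hr0.le, le_refl]
    obtain ⟨w₀, hw₀A, hw₀min⟩ := hAcomp.exists_isMinOn hAne (hV1c.abs.continuousOn)
    set η : ℝ := |deriv V w₀| with hη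
    have hη0 : 0 < η := by
      rw [hη, abs_pos]
      apply hρ w₀
      · intro heq
        have := hw₀A.2
        rw [heq] at this
        simp only [Set.mem_setOf_eq, sub_self, abs_zero] at this
        linarith
      · exact abs_le.mpr ⟨by linarith [hw₀A.1.1], by linarith [hw₀A.1.2]⟩
    obtain ⟨T, hT⟩ := Metric.tendsto_atTop.mp hgrad0 η hη0
    have hball : Metric.ball ((z : ℝ) : AddCircle p) r ∈ 𝓝 ((z : ℝ) : AddCircle p) :=
      Metric.ball_mem_nhds _ hr0
    obtain ⟨t₀, ht₀mem, ht₀T⟩ := ((hclust _ hball).and_eventually (eventually_ge_atTop T)).exists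
    rw [Metric.mem_ball] at ht₀mem
    refine ⟨t₀, fun t ht => ?_⟩
    have htrap : dist ((y t : ℝ) : AddCircle p) ((z : ℝ) : AddCircle p) < r := by
      by_contra hge
      push_neg at hge
      set d : ℝ → ℝ := fun s => dist ((y s : ℝ) : AddCircle p) ((z : ℝ) : AddCircle p) with hd
      have hdc : Continuous d :=
        (((AddCircle.continuous_mk' p).comp hyc).dist continuous_const)
      have hsub : Set.Icc (d t₀) (d t) ⊆ d '' Set.Icc t₀ t :=
        intermediate_value_Icc ht hdc.continuousOn
      have hrmem : r ∈ Set.Icc (d t₀) (d t) := ⟨le_of_lt ht₀mem, hge⟩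
      obtain ⟨s, hsmem, hds⟩ := hsub hrmem
      have h1 : |w s - z| = r := by rw [hwd s]; exact hds
      have h2 : w s ∈ A := by
        constructor
        · have := abs_le.mp (h1.le.trans hrρ)
          exact ⟨by linarith [this.1], by linarith [this.2]⟩
        · simp only [Set.mem_setOf_eq, h1, le_refl]
      have h3 : η ≤ |deriv V (w s)| := hw₀min h2
      rw [hwV1 s] at h3
      have h4 := hT s (le_trans ht₀T hsmem.1)
      rw [Real.dist_eq, sub_zero] at h4
      linarith
    calc dist ((y t : ℝ) : AddCircle p) ((z : ℝ) : AddCircle p) < r := htrap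
    _ ≤ ε / 2 := min_le_left _ _
    _ < ε := by linarith
  -- identify the limit of V ∘ y
  have hwz : Tendsto w atTop (𝓝 z) := by
    rw [tendsto_iff_dist_tendsto_zero]
    have : (fun t => dist (w t) z) = fun t => dist ((y t : ℝ) : AddCircle p) ((z : ℝ) : AddCircle p) := by
      funext t; rw [Real.dist_eq, hwd t]
    rw [this]
    exact (tendsto_iff_dist_tendsto_zero.mp hycirc)
  have hVy2 : Tendsto (fun t => V (y t)) atTop (𝓝 (V z)) := by
    have : Tendsto (fun t => V (w t)) atTop (𝓝 (V z)) := (hVc.tendsto z).comp hwz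
    simpa only [hwV] using this
  have hVy1 : Tendsto (fun t => V (y t)) atTop (𝓝 (lam - νp ^ 2 - 0 ^ 2)) := by
    have h1 : Tendsto (fun t => lam - ν t ^ 2 - μ t ^ 2) atTop (𝓝 (lam - νp ^ 2 - 0 ^ 2)) :=
      ((tendsto_const_nhds.sub (hνp.pow 2)).sub (hμ0.pow 2))
    have h2 : (fun t => lam - ν t ^ 2 - μ t ^ 2) = fun t => V (y t) := by
      funext t; have := henergy t; linarith
    rwa [h2] at h1
  have hVz : V z = lam - νp ^ 2 := by
    have := tendsto_nhds_unique hVy1 hVy2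
    simpa using this.symm
  exact ⟨z, νp, hz0, by rw [hVz]; ring, hμ0, hνp, hycirc⟩

/-- for a Morse, 2π-periodic potential, every maximally extended
bicharacteristic of `W` at energy `λ` converges, in each time direction, to a
radial point (a zero of `W` over a critical point of `V` on the circle). -/
theorem stmt_5 (V : ℝ → ℝ) (hV : ContDiff ℝ (⊤ : ℕ∞) V)
    (hper : Function.Periodic V (2 * Real.pi))
    (hMorse : ∀ y : ℝ, deriv V y = 0 → deriv (deriv V) y ≠ 0)
    (lam : ℝ) (y ν μ : ℝ → ℝ)
    (hy : ∀ t, HasDerivAt y (2 * μ t) t)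
    (hν : ∀ t, HasDerivAt ν (2 * μ t ^ 2) t)
    (hμ : ∀ t, HasDerivAt μ (-(deriv V (y t) + 2 * ν t * μ t)) t)
    (henergy : ∀ t, ν t ^ 2 + μ t ^ 2 + V (y t) = lam) :
    ∃ yp ym νp νm : ℝ,
      deriv V yp = 0 ∧ deriv V ym = 0 ∧
      νp ^ 2 = lam - V yp ∧ νm ^ 2 = lam - V ym ∧ νm ≤ νp ∧
      Filter.Tendsto μ Filter.atTop (nhds 0) ∧
      Filter.Tendsto ν Filter.atTop (nhds νp) ∧
      Filter.Tendsto (fun t => (y t : AddCircle (2 * Real.pi))) Filter.atTop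
        (nhds (yp : AddCircle (2 * Real.pi))) ∧
      Filter.Tendsto μ Filter.atBot (nhds 0) ∧
      Filter.Tendsto ν Filter.atBot (nhds νm) ∧
      Filter.Tendsto (fun t => (y t : AddCircle (2 * Real.pi))) Filter.atBot
        (nhds (ym : AddCircle (2 * Real.pi))) := by
  obtain ⟨yp, νp, hyp0, hyp1, hμtop, hνtop, hytop⟩ :=
    aux_conv V hV hper hMorse lam y ν μ hy hν hμ henergy
  -- time-reversed trajectory
  set y2 : ℝ → ℝ := fun t => y (-t) with hy2def
  set ν2 : ℝ → ℝ := fun t => -ν (-t) with hν2def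
  set μ2 : ℝ → ℝ := fun t => -μ (-t) with hμ2def
  have hneg1 : ∀ t : ℝ, HasDerivAt (fun s : ℝ => -s) (-1) t := fun t => (hasDerivAt_id t).neg
  have hy2' : ∀ t, HasDerivAt y2 (2 * μ2 t) t := by
    intro t
    have := (hy (-t)).comp t (hneg1 t)
    refine this.congr_deriv ?_
    simp [hμ2def]
  have hν2' : ∀ t, HasDerivAt ν2 (2 * μ2 t ^ 2) t := by
    intro t
    have := ((hν (-t)).comp t (hneg1 t)).neg
    refine this.congr_deriv ?_
    simp [hμ2def]
  have hμ2' : ∀ t, HasDerivAt μ2 (-(deriv V (y2 t) + 2 * ν2 t * μ2 t)) t := by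
    intro t
    have := ((hμ (-t)).comp t (hneg1 t)).neg
    refine this.congr_deriv ?_
    simp [hμ2def, hν2def, hy2def]
  have henergy2 : ∀ t, ν2 t ^ 2 + μ2 t ^ 2 + V (y2 t) = lam := by
    intro t
    have := henergy (-t)
    simp only [hν2def, hμ2def, hy2def, neg_sq]
    linarith
  obtain ⟨ym, νm', hym0, hym1, hμ2top, hν2top, hy2top⟩ :=
    aux_conv V hV hper hMorse lam y2 ν2 μ2 hy2' hν2' hμ2' henergy2
  have hneg : Filter.Tendsto (fun t : ℝ => -t) Filter.atBot Filter.atTop :=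
    tendsto_neg_atBot_atTop
  -- μ at -∞
  have hμbot : Filter.Tendsto μ Filter.atBot (nhds 0) := by
    have h1 : Filter.Tendsto (fun t => μ2 (-t)) Filter.atBot (nhds 0) := hμ2top.comp hneg
    have h2 : (fun t => -(μ2 (-t))) = μ := by funext t; simp [hμ2def]
    have h3 := h1.neg
    rw [h2, neg_zero] at h3
    exact h3
  -- ν at -∞
  have hνbot : Filter.Tendsto ν Filter.atBot (nhds (-νm')) := by
    have h1 : Filter.Tendsto (fun t => ν2 (-t)) Filter.atBot (nhds νm') := hν2top.comp hneg
    have h2 : (fun t => -(ν2 (-t))) = ν := by funext t; simp [hν2def]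
    have h3 := h1.neg
    rw [h2] at h3
    exact h3
  -- y at -∞
  have hybot : Filter.Tendsto (fun t => (y t : AddCircle (2 * Real.pi))) Filter.atBot
      (nhds (ym : AddCircle (2 * Real.pi))) := by
    have h1 := hy2top.comp hneg
    have h2 : ((fun t => (y2 t : AddCircle (2 * Real.pi))) ∘ fun t : ℝ => -t) =
        fun t => (y t : AddCircle (2 * Real.pi)) := by
      funext t; simp [hy2def]
    rwa [h2] at h1
  -- monotonicity and ordering of limits
  have hmono : Monotone ν := by
    apply monotone_of_deriv_nonneg (fun t => (hν t).differentiableAt)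
    intro t; rw [(hν t).deriv]; positivity
  have hle1 : -νm' ≤ ν 0 :=
    le_of_tendsto hνbot (Filter.eventually_atBot.mpr ⟨0, fun t ht => hmono ht⟩)
  have hle2 : ν 0 ≤ νp :=
    ge_of_tendsto hνtop (Filter.eventually_atTop.mpr ⟨0, fun t ht => hmono ht⟩)
  exact ⟨yp, ym, νp, -νm', hyp0, hym0, hyp1, by rw [neg_sq]; exact hym1,
    le_trans hle1 hle2, hμtop, hνtop, hytop, hμbot, hνbot, hybot⟩
end

section
/- Let V : ℝ → ℝ be smooth and 2π-periodic and perfect Morse: there exist y_min and y_max such that V′(y) = 0 if and only if y ≡ y_min or y ≡ y_max modulo 2π, with V″(y_min) > 0 and V″(y_max) < 0. Set κ = V(y_min) and K = V(y_max), and let κ < λ < K. Then the characteristic variety Σ(λ) := {(cos y, sin y, ν, μ) ∈ ℝ⁴ : y, ν, μ ∈ ℝ, ν² + μ² + V(y) = λ}, with the subspace topology of ℝ⁴, is homeomorphic to the 2-sphere S². -/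
open Real Set Metric

private lemma perd {f : ℝ → ℝ} {c : ℝ} (h : Function.Periodic f c) :
    Function.Periodic (deriv f) c := by
  intro x
  have hfe : (fun y => f (y + c)) = f := funext h
  calc deriv f (x + c) = deriv (fun y => f (y + c)) x := (deriv_comp_add_const f c x).symm
    _ = deriv f x := by rw [hfe]

private lemma cos_sin_eq {x y : ℝ} (hc : Real.cos x = Real.cos y)
    (hs : Real.sin x = Real.sin y) : ∃ k : ℤ, x = y + 2 * π * k := by
  have he : Complex.exp (x * Complex.I) = Complex.exp (y * Complex.I) := by
    rw [Complex.exp_mul_I, Complex.exp_mul_I]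
    push_cast [← Complex.ofReal_cos, ← Complex.ofReal_sin, hc, hs]
    ring
  rw [Complex.exp_eq_exp_iff_exists_int] at he
  obtain ⟨n, hn⟩ := he
  refine ⟨n, ?_⟩
  have := congrArg Complex.im hn
  simp [Complex.add_im, Complex.mul_im] at this
  linarith

private lemma sphere3_iff (p : EuclideanSpace ℝ (Fin 3)) :
    p ∈ sphere (0 : EuclideanSpace ℝ (Fin 3)) 1 ↔ p 0 ^ 2 + p 1 ^ 2 + p 2 ^ 2 = 1 := by
  rw [mem_sphere_zero_iff_norm, EuclideanSpace.norm_eq, Fin.sum_univ_three]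
  rw [show ∀ a b c : ℝ, ‖a‖^2 + ‖b‖^2 + ‖c‖^2 = a^2+b^2+c^2 by intros; simp [Real.norm_eq_abs, sq_abs]]
  exact Real.sqrt_eq_one

private noncomputable def emk (u v w : ℝ) : EuclideanSpace ℝ (Fin 3) :=
  (WithLp.equiv 2 (Fin 3 → ℝ)).symm ![u, v, w]

private lemma emk0 (u v w : ℝ) : emk u v w 0 = u := rfl
private lemma emk1 (u v w : ℝ) : emk u v w 1 = v := rfl
private lemma emk2 (u v w : ℝ) : emk u v w 2 = w := rfl

set_option maxHeartbeats 2000000 in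
private lemma aux_homeo (W : ℝ → ℝ) (hW : Continuous W) (lam a b : ℝ)
    (hab : a < b) (hba : b - a < 2 * π)
    (hWa : W a = lam) (hWb : W b = lam)
    (hint : ∀ y ∈ Ioo a b, W y < lam)
    (hrep : ∀ y : ℝ, W y ≤ lam →
      ∃ y' ∈ Icc a b, Real.cos y' = Real.cos y ∧ Real.sin y' = Real.sin y ∧ W y' = W y) :
    Nonempty
      ((({p : ℝ × ℝ × ℝ × ℝ | ∃ y ν μ : ℝ,
          p = (Real.cos y, Real.sin y, ν, μ) ∧ ν ^ 2 + μ ^ 2 + W y = lam} :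
          Set (ℝ × ℝ × ℝ × ℝ))) ≃ₜ
        ↥(Metric.sphere (0 : EuclideanSpace ℝ (Fin 3)) 1)) := by
  set τ : ℝ → ℝ := fun x => (a + b) / 2 + x * ((b - a) / 2) with hτ
  set F : ℝ → ℝ := fun y => lam - W y with hFdef
  have hπ := Real.two_pi_pos
  have hba2 : 0 < (b - a) / 2 := by linarith
  have hτc : Continuous τ := by rw [hτ]; continuity
  have hτa : τ (-1) = a := by simp only [hτ]; ring
  have hτb : τ 1 = b := by simp only [hτ]; ring
  have hτmono : StrictMono τ := fun u v huv => by simp only [hτ]; nlinarith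
  have hτmem : ∀ x : ℝ, x ∈ Icc (-1:ℝ) 1 → τ x ∈ Icc a b := by
    intro x hx
    exact ⟨hτa ▸ hτmono.monotone hx.1, hτb ▸ hτmono.monotone hx.2⟩
  have hτIoo : ∀ x : ℝ, x ∈ Ioo (-1:ℝ) 1 → τ x ∈ Ioo a b := by
    intro x hx
    exact ⟨hτa ▸ hτmono hx.1, hτb ▸ hτmono hx.2⟩
  have hFc : Continuous F := by rw [hFdef]; exact continuous_const.sub hW
  have hFnonneg : ∀ y ∈ Icc a b, 0 ≤ F y := by
    intro y hy
    rcases eq_or_lt_of_le hy.1 with h | h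
    · simp [hFdef, ← h, hWa]
    rcases eq_or_lt_of_le hy.2 with h' | h'
    · simp [hFdef, h', hWb]
    · have := hint y ⟨h, h'⟩
      simp only [hFdef]; linarith
  have hFpos : ∀ y ∈ Ioo a b, 0 < F y := by
    intro y hy
    have := hint y hy
    simp only [hFdef]; linarith
  have hFa : F a = 0 := by simp [hFdef, hWa]
  have hFb : F b = 0 := by simp [hFdef, hWb]
  set c : EuclideanSpace ℝ (Fin 3) → ℝ :=
    fun p => Real.sqrt (F (τ (p 0))) / Real.sqrt (p 1 ^ 2 + p 2 ^ 2) with hc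
  set Φ : EuclideanSpace ℝ (Fin 3) → ℝ × ℝ × ℝ × ℝ :=
    fun p => (Real.cos (τ (p 0)), Real.sin (τ (p 0)), c p * p 1, c p * p 2) with hΦ
  -- F vanishes at poles
  have hpole : ∀ p : EuclideanSpace ℝ (Fin 3), p 0 ^ 2 = 1 → F (τ (p 0)) = 0 := by
    intro p h
    have : (p 0 - 1) * (p 0 + 1) = 0 := by ring_nf; linarith
    rcases mul_eq_zero.mp this with h' | h'
    · have : p 0 = 1 := by linarith
      rw [this, hτb, hFb]
    · have : p 0 = -1 := by linarith
      rw [this, hτa, hFa]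
  -- membership
  have hmem : ∀ p : EuclideanSpace ℝ (Fin 3), p ∈ sphere (0 : EuclideanSpace ℝ (Fin 3)) 1 →
      Φ p ∈ {p : ℝ × ℝ × ℝ × ℝ | ∃ y ν μ : ℝ,
        p = (Real.cos y, Real.sin y, ν, μ) ∧ ν ^ 2 + μ ^ 2 + W y = lam} := by
    intro p hp
    rw [sphere3_iff] at hp
    refine ⟨τ (p 0), c p * p 1, c p * p 2, rfl, ?_⟩
    have hx : p 0 ∈ Icc (-1:ℝ) 1 := ⟨by nlinarith, by nlinarith⟩
    have hFx := hFnonneg _ (hτmem _ hx)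
    have hgoal : (c p * p 1) ^ 2 + (c p * p 2) ^ 2 = F (τ (p 0)) := by
      rcases eq_or_lt_of_le (by positivity : (0:ℝ) ≤ p 1 ^ 2 + p 2 ^ 2) with hs | hs
      · have h1 : p 1 = 0 := by nlinarith
        have h2 : p 2 = 0 := by nlinarith
        have h0 : p 0 ^ 2 = 1 := by nlinarith
        rw [h1, h2, hpole p h0]; ring
      · have hcsq : c p ^ 2 = F (τ (p 0)) / (p 1 ^ 2 + p 2 ^ 2) := by
          rw [hc, div_pow, Real.sq_sqrt hFx, Real.sq_sqrt (le_of_lt hs)]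
        calc (c p * p 1) ^ 2 + (c p * p 2) ^ 2 = c p ^ 2 * (p 1 ^ 2 + p 2 ^ 2) := by ring
          _ = F (τ (p 0)) := by rw [hcsq]; field_simp
    have : F (τ (p 0)) = lam - W (τ (p 0)) := by rw [hFdef]
    linarith [hgoal, this]
  -- bound for squeeze
  have hbound : ∀ (p : EuclideanSpace ℝ (Fin 3)) (j : Fin 3), p j ^ 2 ≤ p 1 ^ 2 + p 2 ^ 2 →
      |c p * p j| ≤ Real.sqrt (F (τ (p 0))) := by
    intro p j hj
    rcases eq_or_lt_of_le (by positivity : (0:ℝ) ≤ p 1 ^ 2 + p 2 ^ 2) with hs | hs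
    · have : p j = 0 := by nlinarith
      simp [this, Real.sqrt_nonneg]
    · have h1 : |c p * p j| = Real.sqrt (F (τ (p 0))) / Real.sqrt (p 1 ^ 2 + p 2 ^ 2) * |p j| := by
        rw [hc, abs_mul, abs_div, abs_of_nonneg (Real.sqrt_nonneg _), abs_of_nonneg (Real.sqrt_nonneg _)]
      have h2 : |p j| ≤ Real.sqrt (p 1 ^ 2 + p 2 ^ 2) := by
        rw [← Real.sqrt_sq_eq_abs]; exact Real.sqrt_le_sqrt hj
      have h3 : (0:ℝ) < Real.sqrt (p 1 ^ 2 + p 2 ^ 2) := Real.sqrt_pos.mpr hs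
      rw [h1]
      calc Real.sqrt (F (τ (p 0))) / Real.sqrt (p 1 ^ 2 + p 2 ^ 2) * |p j|
          ≤ Real.sqrt (F (τ (p 0))) / Real.sqrt (p 1 ^ 2 + p 2 ^ 2) * Real.sqrt (p 1 ^ 2 + p 2 ^ 2) :=
            mul_le_mul_of_nonneg_left h2 (by positivity)
        _ = Real.sqrt (F (τ (p 0))) := div_mul_cancel₀ _ (ne_of_gt h3)
  -- continuity of the scalar components on the sphere
  have hg : Continuous fun p : EuclideanSpace ℝ (Fin 3) => Real.sqrt (F (τ (p 0))) :=
    Real.continuous_sqrt.comp (hFc.comp (hτc.comp (EuclideanSpace.proj (0 : Fin 3)).continuous))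
  have hproj : ∀ i : Fin 3, Continuous fun p : EuclideanSpace ℝ (Fin 3) => p i :=
    fun i => (EuclideanSpace.proj i).continuous
  have hcont3 : ∀ j : Fin 3, (j ^ 2 : ℝ) = (j:ℝ)^2 → True := fun _ _ => trivial
  clear hcont3
  have hcont : ∀ j : Fin 3, (∀ p : EuclideanSpace ℝ (Fin 3), p j ^ 2 ≤ p 1 ^ 2 + p 2 ^ 2) →
      Continuous fun q : sphere (0 : EuclideanSpace ℝ (Fin 3)) 1 => c q.1 * q.1 j := by
    intro j hj
    rw [continuous_iff_continuousAt]
    intro q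
    by_cases hs : q.1 1 ^ 2 + q.1 2 ^ 2 = 0
    · -- pole
      have hq := (sphere3_iff q.1).mp q.2
      have hq0 : q.1 0 ^ 2 = 1 := by nlinarith
      have hF0 : F (τ (q.1 0)) = 0 := hpole _ hq0
      have hjz : q.1 j = 0 := by nlinarith [hj q.1]
      have hval : c q.1 * q.1 j = 0 := by rw [hjz, mul_zero]
      rw [ContinuousAt, hval]
      apply squeeze_zero_norm
        (a := fun q : sphere (0 : EuclideanSpace ℝ (Fin 3)) 1 => Real.sqrt (F (τ (q.1 0))))
      · intro n
        exact hbound n.1 j (hj n.1)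
      · have h0 : Real.sqrt (F (τ (q.1 0))) = 0 := by rw [hF0, Real.sqrt_zero]
        have := (hg.comp continuous_subtype_val).continuousAt (x := q)
        rwa [ContinuousAt, Function.comp_apply, h0] at this
    · -- regular point
      have hspos : 0 < q.1 1 ^ 2 + q.1 2 ^ 2 :=
        lt_of_le_of_ne (by positivity) (Ne.symm hs)
      have hsc : Continuous fun q : sphere (0 : EuclideanSpace ℝ (Fin 3)) 1 =>
          Real.sqrt (q.1 1 ^ 2 + q.1 2 ^ 2) := by
        apply Real.continuous_sqrt.comp
        exact (((hproj 1).comp continuous_subtype_val).pow 2).add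
          (((hproj 2).comp continuous_subtype_val).pow 2)
      simp only [hc]
      apply ContinuousAt.mul
      · apply ContinuousAt.div
        · exact (hg.comp continuous_subtype_val).continuousAt
        · exact hsc.continuousAt
        · exact Real.sqrt_ne_zero'.mpr hspos
      · exact ((hproj j).comp continuous_subtype_val).continuousAt
  have hj1 : ∀ p : EuclideanSpace ℝ (Fin 3), p (1:Fin 3) ^ 2 ≤ p 1 ^ 2 + p 2 ^ 2 := by
    intro p; nlinarith [sq_nonneg (p 2)]
  have hj2 : ∀ p : EuclideanSpace ℝ (Fin 3), p (2:Fin 3) ^ 2 ≤ p 1 ^ 2 + p 2 ^ 2 := by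
    intro p; nlinarith [sq_nonneg (p 1)]
  -- injectivity
  have hinj : ∀ p q : EuclideanSpace ℝ (Fin 3),
      p ∈ sphere (0 : EuclideanSpace ℝ (Fin 3)) 1 →
      q ∈ sphere (0 : EuclideanSpace ℝ (Fin 3)) 1 → Φ p = Φ q → p = q := by
    intro p q hp hq h
    rw [sphere3_iff] at hp hq
    simp only [hΦ, Prod.mk.injEq] at h
    obtain ⟨h1, h2, h3, h4⟩ := h
    obtain ⟨k, hk⟩ := cos_sin_eq h1 h2
    have hpx : p 0 ∈ Icc (-1:ℝ) 1 := ⟨by nlinarith, by nlinarith⟩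
    have hqx : q 0 ∈ Icc (-1:ℝ) 1 := ⟨by nlinarith, by nlinarith⟩
    have hτp := hτmem _ hpx
    have hτq := hτmem _ hqx
    have hk0 : k = 0 := by
      have hd : |(k:ℝ)| < 1 := by
        rw [abs_lt]
        constructor <;> nlinarith [hτp.1, hτp.2, hτq.1, hτq.2]
      exact_mod_cast Int.abs_lt_one_iff.mp (by exact_mod_cast hd)
    rw [hk0] at hk
    push_cast at hk
    have h00 : p 0 = q 0 := hτmono.injective (by linarith)
    have h00sq : p 0 ^ 2 = q 0 ^ 2 := by rw [h00]
    have hsq : q 1 ^ 2 + q 2 ^ 2 = p 1 ^ 2 + p 2 ^ 2 := by linarith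
    rcases eq_or_lt_of_le (by positivity : (0:ℝ) ≤ p 1 ^ 2 + p 2 ^ 2) with hs | hs
    · have e1 : p 1 = 0 := by nlinarith
      have e2 : p 2 = 0 := by nlinarith
      have e3 : q 1 = 0 := by nlinarith
      have e4 : q 2 = 0 := by nlinarith
      ext i
      fin_cases i
      · exact h00
      · show p 1 = q 1
        rw [e1, e3]
      · show p 2 = q 2
        rw [e2, e4]
    · have hx : p 0 ∈ Ioo (-1:ℝ) 1 := ⟨by nlinarith, by nlinarith⟩
      have hFp := hFpos _ (hτIoo _ hx)
      have hcpos : 0 < c p := by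
        simp only [hc]
        exact div_pos (Real.sqrt_pos.mpr hFp) (Real.sqrt_pos.mpr hs)
      have hcpq : c p = c q := by
        simp only [hc]
        rw [h00, hsq]
      rw [← hcpq] at h3 h4
      have e1 : p 1 = q 1 := mul_left_cancel₀ (ne_of_gt hcpos) h3
      have e2 : p 2 = q 2 := mul_left_cancel₀ (ne_of_gt hcpos) h4
      ext i
      fin_cases i
      · exact h00
      · exact e1
      · exact e2
  -- surjectivity
  have hsurj : ∀ v ∈ {p : ℝ × ℝ × ℝ × ℝ | ∃ y ν μ : ℝ,
      p = (Real.cos y, Real.sin y, ν, μ) ∧ ν ^ 2 + μ ^ 2 + W y = lam},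
      ∃ p ∈ sphere (0 : EuclideanSpace ℝ (Fin 3)) 1, Φ p = v := by
    rintro v ⟨y, ν, μ, rfl, hvy⟩
    have hWy : W y ≤ lam := by nlinarith
    obtain ⟨y', hy'ab, hcos, hsin, hWeq⟩ := hrep y hWy
    have hFy' : F y' = ν ^ 2 + μ ^ 2 := by rw [hFdef]; simp only; rw [hWeq]; linarith
    set x := (2 * y' - (a + b)) / (b - a) with hxdef
    have hbne : b - a ≠ 0 := by linarith
    have hτx : τ x = y' := by
      show (a + b) / 2 + x * ((b - a) / 2) = y'
      rw [hxdef]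
      field_simp
      ring
    have hx1 : -1 ≤ x := by
      rw [hxdef, le_div_iff₀ (by linarith : (0:ℝ) < b - a)]
      linarith [hy'ab.1]
    have hx2 : x ≤ 1 := by
      rw [hxdef, div_le_one (by linarith : (0:ℝ) < b - a)]
      linarith [hy'ab.2]
    by_cases hF0 : F y' = 0
    · have hν : ν = 0 := by nlinarith [hFy']
      have hμ : μ = 0 := by nlinarith [hFy']
      have hy'or : y' = a ∨ y' = b := by
        rcases eq_or_lt_of_le hy'ab.1 with h | h
        · exact Or.inl h.symm
        rcases eq_or_lt_of_le hy'ab.2 with h' | h'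
        · exact Or.inr h'
        · exact absurd hF0 (ne_of_gt (hFpos y' ⟨h, h'⟩))
      have hxx : x ^ 2 = 1 := by
        rcases hy'or with h | h
        · have : x = -1 := by rw [hxdef, h]; field_simp; ring
          rw [this]; norm_num
        · have : x = 1 := by rw [hxdef, h]; field_simp; ring
          rw [this]; norm_num
      refine ⟨emk x 0 0, ?_, ?_⟩
      · rw [sphere3_iff, emk0, emk1, emk2]
        rw [hxx]; norm_num
      · simp only [hΦ, emk0, emk1, emk2, mul_zero, hτx, hcos, hsin, hν, hμ]
    · have hFypos : 0 < F y' := lt_of_le_of_ne (by nlinarith [hFy']) (Ne.symm hF0)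
      have hxlt : x ^ 2 < 1 := by
        rcases lt_or_ge (x ^ 2) 1 with h | h
        · exact h
        · exfalso
          have hxx : x ^ 2 = 1 := le_antisymm (by nlinarith) h
          have : (x - 1) * (x + 1) = 0 := by linear_combination hxx
          rcases mul_eq_zero.mp this with h' | h'
          · have hx1' : x = 1 := by linarith
            rw [← hτx, hx1', hτb] at hF0
            exact hF0 hFb
          · have hx1' : x = -1 := by linarith
            rw [← hτx, hx1', hτa] at hF0
            exact hF0 hFa
      set r := Real.sqrt (1 - x ^ 2) with hrdef
      set sF := Real.sqrt (F y') with hsFdef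
      have hrpos : 0 < r := Real.sqrt_pos.mpr (by linarith)
      have hsFpos : 0 < sF := Real.sqrt_pos.mpr hFypos
      have hr2 : r ^ 2 = 1 - x ^ 2 := Real.sq_sqrt (by linarith)
      have hsF2 : sF ^ 2 = F y' := Real.sq_sqrt (le_of_lt hFypos)
      have hs12 : (ν * r / sF) ^ 2 + (μ * r / sF) ^ 2 = 1 - x ^ 2 := by
        have h' : (ν * r / sF) ^ 2 + (μ * r / sF) ^ 2 = (ν ^ 2 + μ ^ 2) * r ^ 2 / sF ^ 2 := by
          field_simp
        rw [h', hsF2, ← hFy', hr2]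
        field_simp
      refine ⟨emk x (ν * r / sF) (μ * r / sF), ?_, ?_⟩
      · rw [sphere3_iff, emk0, emk1, emk2]
        linarith [hs12]
      · simp only [hΦ, hc, emk0, emk1, emk2, hτx, hcos, hsin]
        rw [hs12, ← hrdef, ← hsFdef]
        refine Prod.ext rfl (Prod.ext rfl (Prod.ext ?_ ?_)) <;>
          · simp only
            field_simp
  -- assembly
  let φ : sphere (0 : EuclideanSpace ℝ (Fin 3)) 1 → {p : ℝ × ℝ × ℝ × ℝ | ∃ y ν μ : ℝ,
      p = (Real.cos y, Real.sin y, ν, μ) ∧ ν ^ 2 + μ ^ 2 + W y = lam} :=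
    fun q => ⟨Φ q.1, hmem q.1 q.2⟩
  have hφc : Continuous φ := by
    apply Continuous.subtype_mk
    simp only [hΦ]
    refine Continuous.prodMk ?_ (Continuous.prodMk ?_ (Continuous.prodMk ?_ ?_))
    · exact Real.continuous_cos.comp (hτc.comp ((hproj 0).comp continuous_subtype_val))
    · exact Real.continuous_sin.comp (hτc.comp ((hproj 0).comp continuous_subtype_val))
    · exact hcont 1 hj1
    · exact hcont 2 hj2
  have hφbij : Function.Bijective φ := by
    constructor
    · intro p q h
      exact Subtype.ext (hinj _ _ p.2 q.2 (congrArg Subtype.val h))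
    · intro v
      obtain ⟨p, hp, hpv⟩ := hsurj v.1 v.2
      exact ⟨⟨p, hp⟩, Subtype.ext hpv⟩
  exact ⟨(Continuous.homeoOfEquivCompactToT2 (f := Equiv.ofBijective φ hφbij) hφc).symm⟩

private lemma per_int {f : ℝ → ℝ} (h : Function.Periodic f (2 * π)) (x : ℝ) (k : ℤ) :
    f (x + 2 * π * k) = f x := by
  have := (h.int_mul k) x
  rwa [show (k:ℝ) * (2 * π) = 2 * π * k by ring] at this

private lemma sign_dichotomy {g : ℝ → ℝ} (hg : Continuous g) {u v : ℝ}
    (hne : ∀ y ∈ Ioo u v, g y ≠ 0) :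
    (∀ y ∈ Ioo u v, g y < 0) ∨ (∀ y ∈ Ioo u v, 0 < g y) := by
  by_contra hcon
  push_neg at hcon
  obtain ⟨⟨y1, hy1, hy1'⟩, ⟨y2, hy2, hy2'⟩⟩ := hcon
  have hp1 : 0 < g y1 := lt_of_le_of_ne hy1' (Ne.symm (hne y1 hy1))
  have hp2 : g y2 < 0 := lt_of_le_of_ne hy2' (hne y2 hy2)
  rcases lt_trichotomy y1 y2 with h | h | h
  · obtain ⟨z, hz, hz0⟩ := intermediate_value_Ioo' (le_of_lt h) hg.continuousOn
      (show (0:ℝ) ∈ Ioo (g y2) (g y1) from ⟨hp2, hp1⟩)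
    exact hne z ⟨lt_trans hy1.1 hz.1, lt_trans hz.2 hy2.2⟩ hz0
  · rw [h] at hp1; linarith
  · obtain ⟨z, hz, hz0⟩ := intermediate_value_Ioo (le_of_lt h) hg.continuousOn
      (show (0:ℝ) ∈ Ioo (g y2) (g y1) from ⟨hp2, hp1⟩)
    exact hne z ⟨lt_trans hy2.1 hz.1, lt_trans hz.2 hy1.2⟩ hz0

set_option maxHeartbeats 1000000 in
private lemma stmt8_calc (V : ℝ → ℝ) (hV : ContDiff ℝ (⊤ : ℕ∞) V)
    (hper : Function.Periodic V (2 * Real.pi))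
    (ymin ymax : ℝ)
    (hcrit : ∀ y : ℝ, deriv V y = 0 ↔
      ((∃ k : ℤ, y = ymin + 2 * Real.pi * k) ∨ (∃ k : ℤ, y = ymax + 2 * Real.pi * k)))
    (hmin : 0 < deriv (deriv V) ymin) (hmax : deriv (deriv V) ymax < 0)
    (lam : ℝ) (h1 : V ymin < lam) (h2 : lam < V ymax) :
    ∃ A B : ℝ, A < B ∧ B - A < 2 * π ∧ V A = lam ∧ V B = lam ∧
      (∀ y ∈ Ioo A B, V y < lam) ∧
      (∀ y : ℝ, V y ≤ lam →
        ∃ y' ∈ Icc A B, Real.cos y' = Real.cos y ∧ Real.sin y' = Real.sin y ∧ V y' = V y) := by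
  have hπ := Real.two_pi_pos
  have hVc : Continuous V := hV.continuous
  have hV'c : Continuous (deriv V) := hV.continuous_deriv (by simp)
  -- ymin and ymax are not congruent mod 2π
  have hne : ¬ (∃ k : ℤ, ymin = ymax + 2 * π * k) := by
    rintro ⟨k, hk⟩
    have : deriv (deriv V) ymin = deriv (deriv V) ymax := by
      rw [hk]
      exact per_int (perd (perd hper)) ymax k
    linarith
  -- representative of ymin in (ymax, ymax + 2π)
  set θ := (ymin - ymax) / (2 * π) with hθdef
  have hθ : 2 * π * θ = ymin - ymax := by
    rw [hθdef]; field_simp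
  have hfr : Int.fract θ = θ - ⌊θ⌋ := rfl
  have hfrac0 : Int.fract θ ≠ 0 := by
    intro h
    apply hne
    refine ⟨⌊θ⌋, ?_⟩
    have : θ = (⌊θ⌋ : ℝ) := by rw [hfr] at h; linarith
    nlinarith [hθ, this]
  set m := ymax + 2 * π * Int.fract θ with hmdef
  have hfr01 : 0 < Int.fract θ ∧ Int.fract θ < 1 :=
    ⟨lt_of_le_of_ne (Int.fract_nonneg θ) (Ne.symm hfrac0), Int.fract_lt_one θ⟩
  have hm1 : ymax < m := by rw [hmdef]; nlinarith [hfr01.1]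
  have hm2 : m < ymax + 2 * π := by rw [hmdef]; nlinarith [hfr01.2]
  have hmk : m = ymin + 2 * π * ((-⌊θ⌋ : ℤ) : ℝ) := by
    rw [hmdef, hfr]
    push_cast
    nlinarith [hθ]
  have hVm : V m = V ymin := by rw [hmk]; exact per_int hper ymin (-⌊θ⌋)
  -- only critical point in (ymax, ymax+2π) is m
  have honly : ∀ y : ℝ, ymax < y → y < ymax + 2 * π → y ≠ m → deriv V y ≠ 0 := by
    intro y hy1 hy2 hym hdy
    rcases (hcrit y).mp hdy with ⟨k, hk⟩ | ⟨k, hk⟩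
    · set d : ℤ := k + ⌊θ⌋ with hddef
      have hd' : y - m = 2 * π * (d : ℝ) := by
        rw [hk, hmk, hddef]; push_cast; ring
      have hd0 : d ≠ 0 := by
        intro h
        apply hym
        have : (d : ℝ) = 0 := by exact_mod_cast h
        rw [this, mul_zero] at hd'
        linarith
      have hcast : (1:ℝ) ≤ |(d:ℝ)| := by exact_mod_cast Int.one_le_abs hd0
      have habs : |y - m| < 2 * π := abs_lt.mpr ⟨by linarith, by linarith⟩
      rw [hd', abs_mul, abs_of_pos hπ] at habs
      nlinarith
    · have hk1 : 0 < 2 * π * (k:ℝ) := by rw [hk] at hy1; linarith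
      have hk2 : 2 * π * (k:ℝ) < 2 * π := by rw [hk] at hy2; linarith
      have : (0:ℝ) < (k:ℝ) ∧ (k:ℝ) < 1 := ⟨by nlinarith, by nlinarith⟩
      have : 0 < k ∧ k < 1 := by exact_mod_cast this
      omega
  have hne0a : ∀ y ∈ Ioo ymax m, deriv V y ≠ 0 :=
    fun y hy => honly y hy.1 (lt_trans hy.2 hm2) (ne_of_lt hy.2)
  have hne0b : ∀ y ∈ Ioo m (ymax + 2 * π), deriv V y ≠ 0 :=
    fun y hy => honly y (lt_trans hm1 hy.1) hy.2 (ne_of_gt hy.1)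
  have hVp : V (ymax + 2 * π) = V ymax := by
    have := per_int hper ymax 1
    simpa using this
  -- strict monotonicity on the two arcs
  have hanti : StrictAntiOn V (Icc ymax m) := by
    rcases sign_dichotomy hV'c hne0a with h | h
    · apply strictAntiOn_of_deriv_neg (convex_Icc _ _) hVc.continuousOn
      rwa [interior_Icc]
    · exfalso
      have hmono := strictMonoOn_of_deriv_pos (convex_Icc ymax m) hVc.continuousOn
        (by rwa [interior_Icc])
      have := hmono (left_mem_Icc.mpr (le_of_lt hm1)) (right_mem_Icc.mpr (le_of_lt hm1)) hm1
      rw [hVm] at this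
      linarith
  have hmono : StrictMonoOn V (Icc m (ymax + 2 * π)) := by
    rcases sign_dichotomy hV'c hne0b with h | h
    · exfalso
      have hanti' := strictAntiOn_of_deriv_neg (convex_Icc m (ymax + 2 * π)) hVc.continuousOn
        (by rwa [interior_Icc])
      have := hanti' (left_mem_Icc.mpr (le_of_lt hm2)) (right_mem_Icc.mpr (le_of_lt hm2)) hm2
      rw [hVm, hVp] at this
      linarith
    · apply strictMonoOn_of_deriv_pos (convex_Icc _ _) hVc.continuousOn
      rwa [interior_Icc]
  -- the two crossings
  obtain ⟨A, hA, hVA⟩ := intermediate_value_Ioo' (le_of_lt hm1) hVc.continuousOn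
    (show lam ∈ Ioo (V m) (V ymax) from ⟨hVm ▸ h1, h2⟩)
  obtain ⟨B, hB, hVB⟩ := intermediate_value_Ioo (le_of_lt hm2) hVc.continuousOn
    (show lam ∈ Ioo (V m) (V (ymax + 2 * π)) from ⟨hVm ▸ h1, by rw [hVp]; exact h2⟩)
  have hAB : A < B := lt_trans hA.2 hB.1
  refine ⟨A, B, hAB, by linarith [hA.1, hB.2], hVA, hVB, ?_, ?_⟩
  · intro y hy
    rcases le_or_gt y m with h | h
    · have := hanti ⟨le_of_lt hA.1, le_of_lt hA.2⟩ ⟨by linarith [hA.1, hy.1], h⟩ hy.1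
      rwa [hVA] at this
    · have := hmono ⟨le_of_lt h, by linarith [hB.2, hy.2]⟩ ⟨le_of_lt hB.1, le_of_lt hB.2⟩ hy.2
      rwa [hVB] at this
  · intro y hy
    set θy := (y - ymax) / (2 * π) with hθydef
    have h2πθ : 2 * π * θy = y - ymax := by rw [hθydef]; field_simp
    set y' := ymax + 2 * π * Int.fract θy with hy'def
    have hfry : Int.fract θy = θy - ⌊θy⌋ := rfl
    have hyy' : y' = y + 2 * π * ((-⌊θy⌋ : ℤ) : ℝ) := by
      rw [hy'def, hfry]; push_cast; nlinarith [h2πθ]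
    have hcosy : Real.cos y' = Real.cos y := by
      rw [hyy']; exact per_int Real.cos_periodic y (-⌊θy⌋)
    have hsiny : Real.sin y' = Real.sin y := by
      rw [hyy']; exact per_int Real.sin_periodic y (-⌊θy⌋)
    have hVy' : V y' = V y := by rw [hyy']; exact per_int hper y (-⌊θy⌋)
    have hy'lo : ymax ≤ y' := by rw [hy'def]; nlinarith [Int.fract_nonneg θy]
    have hy'hi : y' < ymax + 2 * π := by rw [hy'def]; nlinarith [Int.fract_lt_one θy]
    have hy'gt : ymax < y' := by
      rcases eq_or_lt_of_le hy'lo with h | h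
      · exfalso
        have hq : V ymax = V y := by rw [h]; exact hVy'
        linarith
      · exact h
    have hAy' : A ≤ y' := by
      by_contra hlt
      push_neg at hlt
      have := hanti ⟨le_of_lt hy'gt, by linarith [hA.2]⟩ ⟨le_of_lt hA.1, le_of_lt hA.2⟩ hlt
      rw [hVA] at this
      rw [hVy'] at this
      linarith
    have hBy' : y' ≤ B := by
      by_contra hlt
      push_neg at hlt
      have := hmono ⟨le_of_lt hB.1, le_of_lt hB.2⟩ ⟨by linarith [hB.1], le_of_lt hy'hi⟩ hlt
      rw [hVB] at this
      rw [hVy'] at this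
      linarith
    exact ⟨y', ⟨hAy', hBy'⟩, hcosy, hsiny, hVy'⟩

/-- for a smooth 2π-periodic perfect Morse `V` with minimum value
`κ` and maximum value `K`, and `κ < λ < K`, the characteristic variety
`{(cos y, sin y, ν, μ) : ν² + μ² + V(y) = λ} ⊆ ℝ⁴` is homeomorphic to `S²`. -/
theorem stmt_8 (V : ℝ → ℝ) (hV : ContDiff ℝ (⊤ : ℕ∞) V)
    (hper : Function.Periodic V (2 * Real.pi))
    (ymin ymax : ℝ)
    (hcrit : ∀ y : ℝ, deriv V y = 0 ↔
      ((∃ k : ℤ, y = ymin + 2 * Real.pi * k) ∨ (∃ k : ℤ, y = ymax + 2 * Real.pi * k)))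
    (hmin : 0 < deriv (deriv V) ymin) (hmax : deriv (deriv V) ymax < 0)
    (lam : ℝ) (h1 : V ymin < lam) (h2 : lam < V ymax) :
    Nonempty
      ((({p : ℝ × ℝ × ℝ × ℝ | ∃ y ν μ : ℝ,
          p = (Real.cos y, Real.sin y, ν, μ) ∧ ν ^ 2 + μ ^ 2 + V y = lam} :
          Set (ℝ × ℝ × ℝ × ℝ))) ≃ₜ
        ↥(Metric.sphere (0 : EuclideanSpace ℝ (Fin 3)) 1)) := by
  obtain ⟨A, B, hAB, hBA, hVA, hVB, hIoo, hrep⟩ :=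
    stmt8_calc V hV hper ymin ymax hcrit hmin hmax lam h1 h2
  exact aux_homeo V hV.continuous lam A B hAB hBA hVA hVB hIoo hrep
end

section
/- Let κ ∈ ℂ, δ > 0, C ≥ 0, and s ∈ ℝ with s > Re κ. Suppose γ : (0, δ] → ℂ is differentiable and the function g(X) := X γ′(X) − κ γ(X) satisfies |g(X)| ≤ C X^s for all X ∈ (0, δ]. Then there is a unique constant c ∈ ℂ such that for some C′ ≥ 0 one has |γ(X) − c X^κ| ≤ C′ X^s for all X ∈ (0, δ], where X^κ = exp(κ log X) denotes the complex power. -/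
/-!
The function `h X = X ^ (-κ) * γ X` has derivative `X ^ (-κ - 1) * (X γ' X - κ γ X)`, which is
`O(X ^ (ε - 1))` with `ε = s - Re κ > 0` and hence integrable at `0`. So `h` has a limit `c` at
`0`, namely `c = h δ - ∫₀^δ h'`, and `h X - c = ∫₀^X h' = O(X ^ ε)`; multiplying by `X ^ κ` gives
`γ X - c X ^ κ = O(X ^ s)`. Two such constants differ by `O(X ^ ε) → 0`.
-/

open Complex Set intervalIntegral Filter Topology

section DerivRpowBound

variable {E : Type*} [NormedAddCommGroup E] [NormedSpace ℝ E] [CompleteSpace E]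
  {f : ℝ → E} {δ ε C : ℝ}

lemma intervalIntegrable_deriv_of_norm_deriv_le_rpow (hδ : 0 < δ) (hε : 0 < ε)
    (hbound : ∀ t ∈ Ioc 0 δ, ‖deriv f t‖ ≤ C * t ^ (ε - 1)) :
    IntervalIntegrable (deriv f) MeasureTheory.volume 0 δ := by
  refine ((intervalIntegrable_rpow' (r := ε - 1) (by linarith)).const_mul C).mono_fun'
    (aestronglyMeasurable_deriv f _) ?_
  rw [uIoc_of_le hδ.le]
  exact (MeasureTheory.ae_restrict_iff' measurableSet_Ioc).2 (.of_forall hbound)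

lemma exists_norm_sub_le_rpow_of_norm_deriv_le (hδ : 0 < δ) (hε : 0 < ε)
    (hdiff : ∀ t ∈ Ioc 0 δ, DifferentiableAt ℝ f t)
    (hbound : ∀ t ∈ Ioc 0 δ, ‖deriv f t‖ ≤ C * t ^ (ε - 1)) :
    ∃ c : E, ∀ X ∈ Ioc 0 δ, ‖f X - c‖ ≤ C / ε * X ^ ε := by
  have hint := intervalIntegrable_deriv_of_norm_deriv_le_rpow hδ hε hbound
  refine ⟨f δ - ∫ t in 0..δ, deriv f t, fun X hX => ?_⟩
  have hint₀ : IntervalIntegrable (deriv f) MeasureTheory.volume 0 X :=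
    hint.mono_set (uIcc_subset_uIcc_left (uIcc_of_le hδ.le ▸ Ioc_subset_Icc_self hX))
  have hintδ : IntervalIntegrable (deriv f) MeasureTheory.volume X δ :=
    hint.mono_set (uIcc_subset_uIcc_right (uIcc_of_le hδ.le ▸ Ioc_subset_Icc_self hX))
  have hftc : ∫ t in X..δ, deriv f t = f δ - f X := by
    refine integral_eq_sub_of_hasDerivAt (fun t ht => (hdiff t ?_).hasDerivAt) hintδ
    rw [uIcc_of_le hX.2] at ht
    exact ⟨hX.1.trans_le ht.1, ht.2⟩
  have hsplit : f X - (f δ - ∫ t in 0..δ, deriv f t) = ∫ t in 0..X, deriv f t := by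
    rw [← integral_add_adjacent_intervals hint₀ hintδ, hftc]
    abel
  rw [hsplit]
  calc ‖∫ t in 0..X, deriv f t‖ ≤ ∫ t in 0..X, C * t ^ (ε - 1) :=
        norm_integral_le_of_norm_le hX.1.le
          (.of_forall fun t ht => hbound t ⟨ht.1, ht.2.trans hX.2⟩)
          ((intervalIntegrable_rpow' (by linarith)).const_mul C)
    _ = C / ε * X ^ ε := by
        rw [integral_const_mul, integral_rpow (Or.inl (by linarith))]
        simp only [sub_add_cancel, Real.zero_rpow hε.ne', sub_zero]
        ring

end DerivRpowBound

lemma hasDerivAt_ofReal_cpow_mul {γ : ℝ → ℂ} {X : ℝ} (a : ℂ) (hX : 0 < X)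
    (hγ : DifferentiableAt ℝ γ X) :
    HasDerivAt (fun x : ℝ => (x : ℂ) ^ a * γ x)
      ((X : ℂ) ^ (a - 1) * (a * γ X + X * deriv γ X)) X := by
  have hX' : (X : ℂ) ≠ 0 := by exact_mod_cast hX.ne'
  have hpow : HasDerivAt (fun x : ℝ => (x : ℂ) ^ a) (a * (X : ℂ) ^ (a - 1)) X :=
    (hasStrictDerivAt_cpow_const (ofReal_mem_slitPlane.2 hX)).hasDerivAt.comp_ofReal
  refine (hpow.mul hγ.hasDerivAt).congr_deriv ?_
  rw [cpow_sub _ _ hX', cpow_one]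
  field_simp

lemma norm_deriv_ofReal_cpow_neg_mul_le {κ : ℂ} {γ : ℝ → ℂ} {X C s : ℝ} (hX : 0 < X)
    (hγ : DifferentiableAt ℝ γ X) (hb : ‖(X : ℂ) * deriv γ X - κ * γ X‖ ≤ C * X ^ s) :
    ‖deriv (fun x : ℝ => (x : ℂ) ^ (-κ) * γ x) X‖ ≤ C * X ^ (s - κ.re - 1) := by
  rw [(hasDerivAt_ofReal_cpow_mul (-κ) hX hγ).deriv, norm_mul,
    norm_cpow_eq_rpow_re_of_pos hX]
  calc X ^ (-κ - 1).re * ‖-κ * γ X + X * deriv γ X‖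
      = X ^ (-κ.re - 1) * ‖(X : ℂ) * deriv γ X - κ * γ X‖ := by
        rw [neg_mul, neg_add_eq_sub]
        simp
    _ ≤ X ^ (-κ.re - 1) * (C * X ^ s) := by gcongr
    _ = C * X ^ (s - κ.re - 1) := by
        rw [mul_left_comm, ← Real.rpow_add hX]
        ring_nf

lemma eq_zero_of_norm_le_mul_rpow {E : Type*} [NormedAddCommGroup E] {a : E} {δ ε K : ℝ}
    (hδ : 0 < δ) (hε : 0 < ε) (h : ∀ X ∈ Ioc 0 δ, ‖a‖ ≤ K * X ^ ε) : a = 0 := by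
  have hlim : Tendsto (fun X : ℝ => K * X ^ ε) (𝓝[>] 0) (𝓝 0) := by
    have := ((Real.continuousAt_rpow_const 0 ε (Or.inr hε.le)).tendsto.const_mul K).mono_left
      (nhdsWithin_le_nhds (s := Ioi 0))
    simpa [Real.zero_rpow hε.ne'] using this
  exact norm_le_zero_iff.1 <| ge_of_tendsto hlim <|
    Filter.mem_of_superset (Ioc_mem_nhdsGT hδ) h

lemma norm_sub_mul_ofReal_cpow_le {κ z c : ℂ} {X K s : ℝ} (hX : 0 < X)
    (h : ‖(X : ℂ) ^ (-κ) * z - c‖ ≤ K * X ^ (s - κ.re)) :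
    ‖z - c * (X : ℂ) ^ κ‖ ≤ K * X ^ s := by
  have hXκ : (X : ℂ) ^ κ ≠ 0 :=
    norm_pos_iff.1 (by rw [norm_cpow_eq_rpow_re_of_pos hX]; positivity)
  calc ‖z - c * (X : ℂ) ^ κ‖ = X ^ κ.re * ‖(X : ℂ) ^ (-κ) * z - c‖ := by
        rw [← norm_cpow_eq_rpow_re_of_pos hX, ← norm_mul, cpow_neg, mul_sub,
          mul_inv_cancel_left₀ hXκ, mul_comm c]
    _ ≤ X ^ κ.re * (K * X ^ (s - κ.re)) := by gcongr
    _ = K * X ^ s := by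
        rw [mul_left_comm, ← Real.rpow_add hX, add_sub_cancel]

lemma eq_of_norm_sub_mul_ofReal_cpow_le {κ : ℂ} {γ : ℝ → ℂ} {δ s K K' : ℝ} {c c' : ℂ}
    (hδ : 0 < δ) (hs : κ.re < s)
    (hc : ∀ X ∈ Ioc 0 δ, ‖γ X - c * (X : ℂ) ^ κ‖ ≤ K * X ^ s)
    (hc' : ∀ X ∈ Ioc 0 δ, ‖γ X - c' * (X : ℂ) ^ κ‖ ≤ K' * X ^ s) : c = c' := by
  refine sub_eq_zero.1
    (eq_zero_of_norm_le_mul_rpow (K := K + K') hδ (sub_pos.2 hs) fun X hX => ?_)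
  have hsum : ‖(c - c') * (X : ℂ) ^ κ‖ ≤ (K + K') * X ^ s := calc
    ‖(c - c') * (X : ℂ) ^ κ‖ = ‖(γ X - c' * (X : ℂ) ^ κ) - (γ X - c * (X : ℂ) ^ κ)‖ := by
      ring_nf
    _ ≤ K' * X ^ s + K * X ^ s := norm_sub_le_of_le (hc' X hX) (hc X hX)
    _ = (K + K') * X ^ s := by ring
  rw [norm_mul, norm_cpow_eq_rpow_re_of_pos hX.1] at hsum
  rw [← mul_le_mul_iff_left₀ (Real.rpow_pos_of_pos hX.1 κ.re), mul_assoc,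
    ← Real.rpow_add hX.1, sub_add_cancel]
  exact hsum

/-- regular-singular ODE lemma: if `X γ′(X) − κ γ(X) = O(X^s)`
on `(0, δ]` with `s > Re κ`, then there is a unique constant `c` with
`γ(X) = c X^κ + O(X^s)`. -/
theorem stmt_13 (κ : ℂ) (δ : ℝ) (hδ : 0 < δ) (C : ℝ) (hC : 0 ≤ C)
    (s : ℝ) (hs : κ.re < s) (γ : ℝ → ℂ)
    (hdiff : ∀ X ∈ Set.Ioc (0 : ℝ) δ, DifferentiableAt ℝ γ X)
    (hbound : ∀ X ∈ Set.Ioc (0 : ℝ) δ,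
      ‖(X : ℂ) * deriv γ X - κ * γ X‖ ≤ C * X ^ s) :
    ∃! c : ℂ, ∃ C' : ℝ, 0 ≤ C' ∧
      ∀ X ∈ Set.Ioc (0 : ℝ) δ, ‖γ X - c * (X : ℂ) ^ κ‖ ≤ C' * X ^ s := by
  have hε : 0 < s - κ.re := sub_pos.2 hs
  obtain ⟨c, hc⟩ := exists_norm_sub_le_rpow_of_norm_deriv_le
    (f := fun X : ℝ => (X : ℂ) ^ (-κ) * γ X) hδ hε
    (fun X hX => (hasDerivAt_ofReal_cpow_mul (-κ) hX.1 (hdiff X hX)).differentiableAt)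
    (fun X hX => norm_deriv_ofReal_cpow_neg_mul_le hX.1 (hdiff X hX) (hbound X hX))
  have hcγ : ∀ X ∈ Ioc 0 δ, ‖γ X - c * (X : ℂ) ^ κ‖ ≤ C / (s - κ.re) * X ^ s :=
    fun X hX => norm_sub_mul_ofReal_cpow_le hX.1 (hc X hX)
  refine ⟨c, ⟨C / (s - κ.re), div_nonneg hC hε.le, hcγ⟩, ?_⟩
  rintro c' ⟨C', -, hc'γ⟩
  exact eq_of_norm_sub_mul_ofReal_cpow_le hδ hs hc'γ hcγ
end

section
/- Let r₁ < 0, x₀ > 0, y₀ > 0, and U = (0, x₀] × [−y₀, y₀]. Let v : U → ℂ be continuously differentiable and set f(x, y) = x ∂_x v(x, y) + r₁ y ∂_y v(x, y). Suppose s ≤ 0 and there is C ≥ 0 with |f(x, y)| ≤ C x^s for all (x, y) ∈ U. Then for every ε > 0 there is C_ε ≥ 0 such that |v(x, y)| ≤ C_ε x^{s−ε} for all (x, y) ∈ U. -/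
/-!
Along the integral curve `t ↦ (x eᵗ, y e^{r₁ t})` of `x ∂ₓ + r₁ y ∂_y` the derivative of `v` is
`f`, and since `r₁ < 0` the curve starting at any `(x, y) ∈ U` stays in `U` until it reaches the
edge `x = x₀` at time `log (x₀ / x)`. On that time interval `|f| ≤ C (x eᵗ)^s ≤ C x^s`, so
`|v(x, y)| ≤ sup_{edge} |v| + C x^s log (x₀ / x)`, and the logarithm costs only `x^{-ε}`.
-/

open Real Set

noncomputable def saddleFlow (r : ℝ) (p : ℝ × ℝ) (t : ℝ) : ℝ × ℝ :=
  (p.1 * exp t, p.2 * exp (r * t))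

noncomputable def transportDeriv (r : ℝ) (Dv : ℝ × ℝ → (ℝ × ℝ →L[ℝ] ℂ)) (p : ℝ × ℝ) : ℂ :=
  (p.1 : ℂ) * Dv p (1, 0) + (r : ℂ) * (p.2 : ℂ) * Dv p (0, 1)

lemma hasDerivAt_saddleFlow (r : ℝ) (p : ℝ × ℝ) (t : ℝ) :
    HasDerivAt (saddleFlow r p) ((saddleFlow r p t).1, r * (saddleFlow r p t).2) t := by
  have hfst := (hasDerivAt_exp t).const_mul p.1
  have hsnd := ((hasDerivAt_exp (r * t)).comp t ((hasDerivAt_id t).const_mul r)).const_mul p.2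
  refine (hfst.prodMk hsnd).congr_deriv ?_
  simp only [saddleFlow, Prod.mk.injEq, true_and]
  ring

lemma ContinuousLinearMap.apply_prod_eq {𝕜 E : Type*} [NontriviallyNormedField 𝕜]
    [NormedAddCommGroup E] [NormedSpace 𝕜 E] (L : 𝕜 × 𝕜 →L[𝕜] E) (a b : 𝕜) :
    L (a, b) = a • L (1, 0) + b • L (0, 1) := by
  have hab : ((a, b) : 𝕜 × 𝕜) = a • ((1 : 𝕜), (0 : 𝕜)) + b • ((0 : 𝕜), (1 : 𝕜)) := by simp
  rw [hab, map_add, map_smul, map_smul]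

lemma hasDerivAt_comp_saddleFlow {v : ℝ × ℝ → ℂ} {Dv : ℝ × ℝ → (ℝ × ℝ →L[ℝ] ℂ)} {r : ℝ}
    {p : ℝ × ℝ} {t : ℝ} (hv : HasFDerivAt v (Dv (saddleFlow r p t)) (saddleFlow r p t)) :
    HasDerivAt (v ∘ saddleFlow r p) (transportDeriv r Dv (saddleFlow r p t)) t := by
  refine (hv.comp_hasDerivAt t (hasDerivAt_saddleFlow r p t)).congr_deriv ?_
  rw [ContinuousLinearMap.apply_prod_eq, transportDeriv, Complex.real_smul, Complex.real_smul]
  push_cast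
  ring

lemma saddleFlow_mem {r x₀ y₀ : ℝ} (hr : r ≤ 0) {p : ℝ × ℝ}
    (hp : p ∈ Ioc (0 : ℝ) x₀ ×ˢ Icc (-y₀) y₀) {t : ℝ} (ht : t ∈ Icc 0 (log (x₀ / p.1))) :
    saddleFlow r p t ∈ Ioc (0 : ℝ) x₀ ×ˢ Icc (-y₀) y₀ := by
  obtain ⟨⟨hx, hxx₀⟩, hy⟩ := hp
  have hexp : exp t ≤ x₀ / p.1 := by
    simpa [exp_log (div_pos (hx.trans_le hxx₀) hx)] using exp_le_exp.2 ht.2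
  have hexp_r : exp (r * t) ≤ 1 := exp_le_one_iff.2 (mul_nonpos_of_nonpos_of_nonneg hr ht.1)
  refine ⟨⟨mul_pos hx (exp_pos t), ?_⟩, abs_le.1 ?_⟩
  · calc p.1 * exp t ≤ p.1 * (x₀ / p.1) := mul_le_mul_of_nonneg_left hexp hx.le
      _ = x₀ := by field_simp
  · calc |p.2 * exp (r * t)| = |p.2| * exp (r * t) := by rw [abs_mul, abs_of_pos (exp_pos _)]
      _ ≤ y₀ * 1 :=
        mul_le_mul (abs_le.2 hy) hexp_r (exp_pos _).le (neg_le_self_iff.1 (hy.1.trans hy.2))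
      _ = y₀ := mul_one y₀

lemma saddleFlow_log_fst (r x₀ : ℝ) {p : ℝ × ℝ} (hx : 0 < p.1) (hx₀ : 0 < x₀) :
    (saddleFlow r p (log (x₀ / p.1))).1 = x₀ := by
  rw [saddleFlow, exp_log (div_pos hx₀ hx)]
  field_simp

theorem norm_le_add_mul_log_of_transport {r x₀ y₀ s C M : ℝ} (hr : r ≤ 0)
    {v : ℝ × ℝ → ℂ} {Dv : ℝ × ℝ → (ℝ × ℝ →L[ℝ] ℂ)}
    (hdiff : ∀ p ∈ Ioc (0 : ℝ) x₀ ×ˢ Icc (-y₀) y₀, HasFDerivAt v (Dv p) p)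
    (hs : s ≤ 0) (hC : 0 ≤ C)
    (hf : ∀ p ∈ Ioc (0 : ℝ) x₀ ×ˢ Icc (-y₀) y₀, ‖transportDeriv r Dv p‖ ≤ C * p.1 ^ s)
    (hM : ∀ y ∈ Icc (-y₀) y₀, ‖v (x₀, y)‖ ≤ M) :
    ∀ p ∈ Ioc (0 : ℝ) x₀ ×ˢ Icc (-y₀) y₀, ‖v p‖ ≤ M + C * p.1 ^ s * log (x₀ / p.1) := by
  intro p hp
  have hx : 0 < p.1 := hp.1.1
  set T := log (x₀ / p.1)
  have hT : 0 ≤ T := log_nonneg ((one_le_div hx).2 hp.1.2)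
  have hderiv : ∀ t ∈ Icc 0 T, HasDerivWithinAt (v ∘ saddleFlow r p)
      (transportDeriv r Dv (saddleFlow r p t)) (Icc 0 T) t := fun t ht =>
    (hasDerivAt_comp_saddleFlow (hdiff _ (saddleFlow_mem hr hp ht))).hasDerivWithinAt
  have hbound : ∀ t ∈ Ico 0 T, ‖transportDeriv r Dv (saddleFlow r p t)‖ ≤ C * p.1 ^ s := by
    intro t ht
    refine (hf _ (saddleFlow_mem hr hp (Ico_subset_Icc_self ht))).trans ?_
    exact mul_le_mul_of_nonneg_left
      (rpow_le_rpow_of_nonpos hx (le_mul_of_one_le_right hx.le (one_le_exp ht.1)) hs) hC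
  have hvar := norm_image_sub_le_of_norm_deriv_le_segment' hderiv hbound T ⟨hT, le_rfl⟩
  have hend : ‖(v ∘ saddleFlow r p) T‖ ≤ M := by
    have hmem := saddleFlow_mem hr hp ⟨hT, le_rfl⟩
    have hedge : saddleFlow r p T = (x₀, (saddleFlow r p T).2) :=
      Prod.ext (saddleFlow_log_fst r x₀ hx (hx.trans_le hp.1.2)) rfl
    rw [Function.comp_apply, hedge]
    exact hM _ hmem.2
  have hstart : (v ∘ saddleFlow r p) 0 = v p := by simp [saddleFlow]
  calc ‖v p‖ ≤ ‖(v ∘ saddleFlow r p) T‖ + ‖(v ∘ saddleFlow r p) T - v p‖ :=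
        norm_le_norm_add_norm_sub _ _
    _ ≤ M + C * p.1 ^ s * (T - 0) := add_le_add hend (hstart ▸ hvar)
    _ = M + C * p.1 ^ s * T := by rw [sub_zero]

lemma add_mul_rpow_mul_log_le {x₀ x s ε M C : ℝ} (hx : 0 < x) (hxx₀ : x ≤ x₀) (hε : 0 < ε)
    (hs : s ≤ 0) (hM : 0 ≤ M) (hC : 0 ≤ C) :
    M + C * x ^ s * log (x₀ / x) ≤ (M * x₀ ^ (ε - s) + C / ε * x₀ ^ ε) * x ^ (s - ε) := by
  have hx₀ : 0 < x₀ := hx.trans_le hxx₀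
  have hpow (a : ℝ) : (x₀ / x) ^ a = x₀ ^ a * x ^ (-a) := by
    rw [div_rpow hx₀.le hx.le, rpow_neg hx.le, div_eq_mul_inv]
  have hM_le : M ≤ M * (x₀ ^ (ε - s) * x ^ (s - ε)) := by
    have h := one_le_rpow ((one_le_div hx).2 hxx₀) (by linarith : 0 ≤ ε - s)
    rw [hpow, neg_sub] at h
    exact le_mul_of_one_le_right hM h
  have hlog_le : C * x ^ s * log (x₀ / x) ≤ C / ε * x₀ ^ ε * x ^ (s - ε) := by
    calc C * x ^ s * log (x₀ / x) ≤ C * x ^ s * ((x₀ / x) ^ ε / ε) :=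
          mul_le_mul_of_nonneg_left (log_le_rpow_div (div_pos hx₀ hx).le hε)
            (mul_nonneg hC (rpow_nonneg hx.le s))
      _ = C / ε * x₀ ^ ε * (x ^ s * x ^ (-ε)) := by rw [hpow]; ring
      _ = C / ε * x₀ ^ ε * x ^ (s - ε) := by rw [← rpow_add hx, sub_eq_add_neg]
  linarith

theorem stmt_14_general (r₁ x₀ y₀ : ℝ) (hr : r₁ < 0) (hx : 0 < x₀)
    (v : ℝ × ℝ → ℂ) (Dv : ℝ × ℝ → (ℝ × ℝ →L[ℝ] ℂ))
    (hdiff : ∀ p ∈ Set.Ioc (0 : ℝ) x₀ ×ˢ Set.Icc (-y₀) y₀, HasFDerivAt v (Dv p) p)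
    (s : ℝ) (hs : s ≤ 0) (C : ℝ) (hC : 0 ≤ C)
    (hf : ∀ p ∈ Set.Ioc (0 : ℝ) x₀ ×ˢ Set.Icc (-y₀) y₀,
      ‖(p.1 : ℂ) * Dv p (1, 0) + (r₁ : ℂ) * (p.2 : ℂ) * Dv p (0, 1)‖ ≤ C * p.1 ^ s) :
    ∀ ε > (0 : ℝ), ∃ Cε : ℝ, 0 ≤ Cε ∧
      ∀ p ∈ Set.Ioc (0 : ℝ) x₀ ×ˢ Set.Icc (-y₀) y₀,
        ‖v p‖ ≤ Cε * p.1 ^ (s - ε) := by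
  obtain ⟨M₀, hM₀⟩ : ∃ M₀, ∀ y ∈ Icc (-y₀) y₀, ‖v (x₀, y)‖ ≤ M₀ := by
    refine isCompact_Icc.exists_bound_of_continuousOn fun y hy => ?_
    exact ((hdiff (x₀, y) ⟨⟨hx, le_rfl⟩, hy⟩).continuousAt.comp
      (Continuous.prodMk_right x₀).continuousAt).continuousWithinAt
  set M := max M₀ 0
  have hvM := norm_le_add_mul_log_of_transport hr.le hdiff hs hC hf
    fun y hy => (hM₀ y hy).trans (le_max_left M₀ 0)
  intro ε hε
  refine ⟨M * x₀ ^ (ε - s) + C / ε * x₀ ^ ε, by positivity, fun p hp => ?_⟩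
  exact (hvM p hp).trans
    (add_mul_rpow_mul_log_le hp.1.1 hp.1.2 hε hs (le_max_right M₀ 0) hC)

/-- part (i) of the transport lemma at an outgoing saddle. If
`v` is `C¹` on `U = (0,x₀] × [−y₀,y₀]` and `f = x ∂ₓv + r₁ y ∂_y v` satisfies
`|f| ≤ C x^s` with `s ≤ 0`, then for every `ε > 0`, `|v| ≤ C_ε x^{s−ε}` on `U`. -/
theorem stmt_14 (r₁ x₀ y₀ : ℝ) (hr : r₁ < 0) (hx : 0 < x₀) (hy : 0 < y₀)
    (v : ℝ × ℝ → ℂ) (Dv : ℝ × ℝ → (ℝ × ℝ →L[ℝ] ℂ))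
    (hdiff : ∀ p ∈ Set.Ioc (0 : ℝ) x₀ ×ˢ Set.Icc (-y₀) y₀, HasFDerivAt v (Dv p) p)
    (hcont : ContinuousOn Dv (Set.Ioc (0 : ℝ) x₀ ×ˢ Set.Icc (-y₀) y₀))
    (s : ℝ) (hs : s ≤ 0) (C : ℝ) (hC : 0 ≤ C)
    (hf : ∀ p ∈ Set.Ioc (0 : ℝ) x₀ ×ˢ Set.Icc (-y₀) y₀,
      ‖(p.1 : ℂ) * Dv p (1, 0) + (r₁ : ℂ) * (p.2 : ℂ) * Dv p (0, 1)‖ ≤ C * p.1 ^ s) :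
    ∀ ε > (0 : ℝ), ∃ Cε : ℝ, 0 ≤ Cε ∧
      ∀ p ∈ Set.Ioc (0 : ℝ) x₀ ×ˢ Set.Icc (-y₀) y₀,
        ‖v p‖ ≤ Cε * p.1 ^ (s - ε) :=
  stmt_14_general r₁ x₀ y₀ hr hx v Dv hdiff s hs C hC hf
end

section
/- Let r₁ < 0, x₀ > 0, y₀ > 0, and U = (0, x₀] × [−y₀, y₀]. Let v : U → ℂ be continuously differentiable and set f(x, y) = x ∂_x v(x, y) + r₁ y ∂_y v(x, y). Suppose s > 0 and there is C ≥ 0 with |f(x, y)| ≤ C x^s and |∂_y f(x, y)| ≤ C x^s for all (x, y) ∈ U. Then there exists a constant a₀ ∈ ℂ such that for every r′ < min(−r₁, s) there is C′ ≥ 0 with |v(x, y) − a₀| ≤ C′ x^{r′} for all (x, y) ∈ U. In particular v extends continuously to x = 0 with constant boundary value a₀. -/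
/-!
Along the characteristic `ξ ↦ (ξ, y (ξ/x)^r₁)` of `x ∂ₓ + r₁ y ∂_y` through `(x, y)` the
derivative of `v` is `f / ξ`, so `v(x, y)` is the value of `v` where the characteristic meets
`{x₀} × [-y₀, y₀]`, minus the integral of `f / ξ` along it. On the axis `y = 0` that integral
converges at `ξ = 0` because `|f| ≤ C ξ^s`; this gives `a₀` and `|v(x, 0) - a₀| ≤ (C/s) x^s`.
Off the axis the characteristic reaches `x₀` at height `y (x/x₀)^(-r₁)`, so the Lipschitz bound
of `v(x₀, ·)`, together with `|f(ξ, η) - f(ξ, 0)| ≤ C ξ^s |η|` from the bound on `∂_y f`, gives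
`|v(x, y) - v(x, 0)| ≲ x^r'` for every `r' ≤ -r₁` with `r' < s`.
-/

open Set MeasureTheory Filter Topology

namespace SaddleTransport

section OneDim

variable {E : Type*} [NormedAddCommGroup E]

lemma tendsto_nhdsGT_of_norm_sub_le_rpow {g : ℝ → E} {a : E} {K r b : ℝ} (hr : 0 < r)
    (hb : 0 < b) (hg : ∀ x ∈ Ioc 0 b, ‖g x - a‖ ≤ K * x ^ r) :
    Tendsto g (𝓝[>] 0) (𝓝 a) := by
  rw [tendsto_iff_norm_sub_tendsto_zero]
  have hlim : Tendsto (fun x : ℝ => K * x ^ r) (𝓝[>] 0) (𝓝 0) := by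
    simpa [Real.zero_rpow hr.ne'] using
      ((Real.continuousAt_rpow_const 0 r (Or.inr hr.le)).tendsto.mono_left
        nhdsWithin_le_nhds).const_mul K
  exact squeeze_zero' (.of_forall fun _ => norm_nonneg _)
    (eventually_of_mem (Ioc_mem_nhdsGT hb) hg) hlim

lemma integrableOn_Ioc_const_mul_rpow {K a b : ℝ} (ha : 0 < a) (hb : 0 ≤ b) :
    IntegrableOn (fun ξ : ℝ => K * ξ ^ (a - 1)) (Ioc 0 b) := by
  rw [← intervalIntegrable_iff_integrableOn_Ioc_of_le hb]
  exact (intervalIntegral.intervalIntegrable_rpow' (by linarith)).const_mul K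

variable [NormedSpace ℝ E]

lemma exists_norm_sub_le_mul_abs {g g' : ℝ → E} {a b : ℝ}
    (hg : ∀ t ∈ Icc a b, HasDerivAt g (g' t) t) (hg' : ContinuousOn g' (Icc a b)) :
    ∃ M, 0 ≤ M ∧ ∀ s ∈ Icc a b, ∀ t ∈ Icc a b, ‖g t - g s‖ ≤ M * |t - s| := by
  obtain ⟨M, hM⟩ := isCompact_Icc.exists_bound_of_continuousOn hg'
  refine ⟨max M 0, le_max_right _ _, fun s hs t ht => ?_⟩
  simpa using (convex_Icc a b).norm_image_sub_le_of_norm_hasDerivWithin_le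
    (fun τ hτ => (hg τ hτ).hasDerivWithinAt) (fun τ hτ => (hM τ hτ).trans (le_max_left _ _)) hs ht

lemma norm_setIntegral_le_of_norm_le_rpow {φ : ℝ → E} {S : Set ℝ} {K a b : ℝ}
    (hK : 0 ≤ K) (ha : 0 < a) (hb : 0 ≤ b) (hS : MeasurableSet S) (hSb : S ⊆ Ioc 0 b)
    (hφ : ∀ ξ ∈ S, ‖φ ξ‖ ≤ K * ξ ^ (a - 1)) :
    ‖∫ ξ in S, φ ξ‖ ≤ K / a * b ^ a := by
  have hint := integrableOn_Ioc_const_mul_rpow (K := K) ha hb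
  calc ‖∫ ξ in S, φ ξ‖ ≤ ∫ ξ in S, K * ξ ^ (a - 1) :=
        norm_integral_le_of_norm_le (hint.mono_set hSb) ((ae_restrict_iff' hS).2 (.of_forall hφ))
    _ ≤ ∫ ξ in Ioc 0 b, K * ξ ^ (a - 1) :=
        setIntegral_mono_set hint ((ae_restrict_iff' measurableSet_Ioc).2
          (.of_forall fun ξ hξ => by have := hξ.1; positivity)) hSb.eventuallyLE
    _ = K / a * b ^ a := by
        rw [← intervalIntegral.integral_of_le hb, intervalIntegral.integral_const_mul,
          integral_rpow (Or.inl (by linarith)), sub_add_cancel, Real.zero_rpow ha.ne']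
        ring

variable [CompleteSpace E]

lemma norm_sub_le_of_hasDerivAt_of_norm_le_rpow {g g' : ℝ → E} {K a x b : ℝ}
    (hK : 0 ≤ K) (ha : 0 < a) (hx : 0 < x) (hxb : x ≤ b)
    (hg : ∀ ξ ∈ Icc x b, HasDerivAt g (g' ξ) ξ) (hg' : ContinuousOn g' (Icc x b))
    (hbound : ∀ ξ ∈ Icc x b, ‖g' ξ‖ ≤ K * ξ ^ (a - 1)) :
    ‖g b - g x‖ ≤ K / a * b ^ a := by
  rw [← uIcc_of_le hxb] at hg hg'
  rw [← intervalIntegral.integral_eq_sub_of_hasDerivAt hg hg'.intervalIntegrable,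
    intervalIntegral.integral_of_le hxb]
  exact norm_setIntegral_le_of_norm_le_rpow hK ha (hx.le.trans hxb) measurableSet_Ioc
    (Ioc_subset_Ioc_left hx.le) fun ξ hξ => hbound ξ (Ioc_subset_Icc_self hξ)

lemma norm_sub_sub_setIntegral_le_of_norm_le_rpow {g g' : ℝ → E} {K a x b : ℝ}
    (hK : 0 ≤ K) (ha : 0 < a) (hx : x ∈ Ioc 0 b)
    (hg : ∀ ξ ∈ Ioc 0 b, HasDerivAt g (g' ξ) ξ) (hg' : ContinuousOn g' (Ioc 0 b))
    (hbound : ∀ ξ ∈ Ioc 0 b, ‖g' ξ‖ ≤ K * ξ ^ (a - 1)) :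
    ‖g x - (g b - ∫ ξ in Ioc 0 b, g' ξ)‖ ≤ K / a * x ^ a := by
  have hint : IntegrableOn g' (Ioc 0 b) :=
    (integrableOn_Ioc_const_mul_rpow ha (hx.1.le.trans hx.2)).mono'
      (hg'.aestronglyMeasurable measurableSet_Ioc)
      ((ae_restrict_iff' measurableSet_Ioc).2 (.of_forall hbound))
  have hIcc : Icc x b ⊆ Ioc 0 b := Icc_subset_Ioc hx.1 le_rfl
  have hftc : g b - g x = ∫ ξ in Ioc x b, g' ξ := by
    rw [← intervalIntegral.integral_of_le hx.2, intervalIntegral.integral_eq_sub_of_hasDerivAt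
      (fun ξ hξ => hg ξ (hIcc (uIcc_of_le hx.2 ▸ hξ)))
      ((hg'.mono hIcc).intervalIntegrable_of_Icc hx.2)]
  have hsplit : ∫ ξ in Ioc 0 b, g' ξ = (∫ ξ in Ioc 0 x, g' ξ) + ∫ ξ in Ioc x b, g' ξ := by
    rw [← setIntegral_union (Ioc_disjoint_Ioc_of_le le_rfl) measurableSet_Ioc
      (hint.mono_set (Ioc_subset_Ioc_right hx.2)) (hint.mono_set (Ioc_subset_Ioc_left hx.1.le)),
      Ioc_union_Ioc_eq_Ioc hx.1.le hx.2]
  have hrepr : g x - (g b - ∫ ξ in Ioc 0 b, g' ξ) = ∫ ξ in Ioc 0 x, g' ξ := by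
    rw [hsplit, ← hftc]; abel
  rw [hrepr]
  exact norm_setIntegral_le_of_norm_le_rpow hK ha hx.1.le measurableSet_Ioc subset_rfl
    fun ξ hξ => hbound ξ (Ioc_subset_Ioc_right hx.2 hξ)

end OneDim

lemma div_rpow_le_div_rpow {x ξ r r' : ℝ} (hx : 0 < x) (hxξ : x ≤ ξ) (hr' : r' ≤ -r) :
    (ξ / x) ^ r ≤ (x / ξ) ^ r' := by
  have hξ : 0 < ξ := hx.trans_le hxξ
  rw [← inv_div, Real.inv_rpow (by positivity), ← Real.rpow_neg (by positivity)]
  exact Real.rpow_le_rpow_of_exponent_ge (by positivity) ((div_le_one hξ).2 hxξ) hr'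

lemma rpow_le_rpow_sub_mul_rpow {x x₀ s r' : ℝ} (hx : 0 < x) (hxx₀ : x ≤ x₀) (hr' : r' ≤ s) :
    x ^ s ≤ x₀ ^ (s - r') * x ^ r' := by
  calc x ^ s = x ^ (s - r') * x ^ r' := by rw [← Real.rpow_add hx, sub_add_cancel]
    _ ≤ x₀ ^ (s - r') * x ^ r' := by gcongr

/-- The integral curve of `x ∂ₓ + r y ∂_y` through `(x, y)`, parametrized by its first
coordinate. -/
noncomputable def characteristic (r x y ξ : ℝ) : ℝ × ℝ := (ξ, y * (ξ / x) ^ r)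

section Characteristic

variable {r x y ξ : ℝ}

@[simp] lemma characteristic_zero : characteristic r x 0 ξ = (ξ, 0) := by
  simp [characteristic]

lemma characteristic_self (hx : 0 < x) : characteristic r x y x = (x, y) := by
  simp [characteristic, div_self hx.ne']

lemma abs_characteristic_snd_le {r' : ℝ} (hx : 0 < x) (hxξ : x ≤ ξ) (hr' : r' ≤ -r) :
    |(characteristic r x y ξ).2| ≤ |y| * (x / ξ) ^ r' := by
  have hξ : 0 < ξ := hx.trans_le hxξ
  simp only [characteristic]
  rw [abs_mul, abs_of_nonneg (Real.rpow_nonneg (div_pos hξ hx).le r)]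
  exact mul_le_mul_of_nonneg_left (div_rpow_le_div_rpow hx hxξ hr') (abs_nonneg y)

lemma characteristic_mem {x₀ y₀ : ℝ} (hr : r ≤ 0) (hx : 0 < x) (hξ : ξ ∈ Icc x x₀)
    (hy : y ∈ Icc (-y₀) y₀) : characteristic r x y ξ ∈ Ioc 0 x₀ ×ˢ Icc (-y₀) y₀ := by
  refine ⟨⟨hx.trans_le hξ.1, hξ.2⟩, abs_le.1 ?_⟩
  calc |(characteristic r x y ξ).2| ≤ |y| * (x / ξ) ^ (0 : ℝ) :=
        abs_characteristic_snd_le hx hξ.1 (by linarith)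
    _ ≤ y₀ := by simpa using abs_le.2 hy

lemma continuousOn_characteristic (hx : 0 < x) : ContinuousOn (characteristic r x y) (Ioi 0) :=
  continuousOn_id.prodMk <| continuousOn_const.mul fun _ ht =>
    ((continuousAt_id.div_const x).rpow_const (Or.inl (div_pos ht hx).ne')).continuousWithinAt

lemma hasDerivAt_characteristic (hx : 0 < x) (hξ : 0 < ξ) :
    HasDerivAt (characteristic r x y) (1, r * (characteristic r x y ξ).2 / ξ) ξ := by
  have hpow : HasDerivAt (fun ξ => (ξ / x) ^ r) (r * (ξ / x) ^ r / ξ) ξ := by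
    refine (((hasDerivAt_id ξ).div_const x).rpow_const (Or.inl (div_pos hξ hx).ne')).congr_deriv ?_
    rw [id, Real.rpow_sub_one (div_pos hξ hx).ne']
    field_simp
  refine (hasDerivAt_id ξ).prodMk ((hpow.const_mul y).congr_deriv ?_)
  simp only [characteristic]
  ring

lemma hasDerivAt_comp_characteristic {v : ℝ × ℝ → ℂ} {D : ℝ × ℝ →L[ℝ] ℂ}
    (hx : 0 < x) (hξ : 0 < ξ) (hv : HasFDerivAt v D (characteristic r x y ξ)) :
    HasDerivAt (fun ξ => v (characteristic r x y ξ))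
      ((ξ * D (1, 0) + r * (characteristic r x y ξ).2 * D (0, 1)) / ξ) ξ := by
  refine (hv.comp_hasDerivAt ξ (hasDerivAt_characteristic hx hξ)).congr_deriv ?_
  have hsplit : ((1 : ℝ), r * (characteristic r x y ξ).2 / ξ)
      = ((1 : ℝ), (0 : ℝ)) + (r * (characteristic r x y ξ).2 / ξ) • ((0 : ℝ), (1 : ℝ)) := by
    simp
  have hξ' : (ξ : ℂ) ≠ 0 := by exact_mod_cast hξ.ne'
  rw [hsplit, map_add, map_smul, Complex.real_smul]
  push_cast
  field_simp

end Characteristic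

section Setting

variable {r x₀ y₀ : ℝ} {v f : ℝ × ℝ → ℂ} {Dv : ℝ × ℝ → (ℝ × ℝ →L[ℝ] ℂ)}

lemma continuousOn_of_eq_transport {s : Set (ℝ × ℝ)} (hDv : ContinuousOn Dv s)
    (hf : ∀ p ∈ s, f p = (p.1 : ℂ) * Dv p (1, 0) + (r : ℂ) * (p.2 : ℂ) * Dv p (0, 1)) :
    ContinuousOn f s := by
  refine ContinuousOn.congr ?_ hf
  have hDv₁ := hDv.clm_apply (continuousOn_const (c := ((1 : ℝ), (0 : ℝ))))
  have hDv₂ := hDv.clm_apply (continuousOn_const (c := ((0 : ℝ), (1 : ℝ))))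
  fun_prop

lemma hasDerivAt_comp_characteristic_of_transport {x y ξ : ℝ} (hr : r ≤ 0) (hx : 0 < x)
    (hξ : ξ ∈ Icc x x₀) (hy : y ∈ Icc (-y₀) y₀)
    (hdiff : ∀ p ∈ Ioc 0 x₀ ×ˢ Icc (-y₀) y₀, HasFDerivAt v (Dv p) p)
    (hfdef : ∀ p ∈ Ioc 0 x₀ ×ˢ Icc (-y₀) y₀,
      f p = (p.1 : ℂ) * Dv p (1, 0) + (r : ℂ) * (p.2 : ℂ) * Dv p (0, 1)) :
    HasDerivAt (fun ξ => v (characteristic r x y ξ)) (f (characteristic r x y ξ) / ξ) ξ := by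
  have hmem := characteristic_mem hr hx hξ hy
  rw [hfdef _ hmem]
  exact hasDerivAt_comp_characteristic hx (hx.trans_le hξ.1) (hdiff _ hmem)

lemma continuousOn_comp_characteristic_div {x y : ℝ} (hr : r ≤ 0) (hx : 0 < x)
    (hy : y ∈ Icc (-y₀) y₀) (hf : ContinuousOn f (Ioc 0 x₀ ×ˢ Icc (-y₀) y₀)) :
    ContinuousOn (fun ξ : ℝ => f (characteristic r x y ξ) / ξ) (Icc x x₀) :=
  (hf.comp ((continuousOn_characteristic hx).mono fun _ hξ => hx.trans_le hξ.1)
    fun _ hξ => characteristic_mem hr hx hξ hy).div Complex.continuous_ofReal.continuousOn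
    fun _ hξ => by exact_mod_cast (hx.trans_le hξ.1).ne'

lemma norm_sub_axis_le {r' s C M x y : ℝ} (hr : r ≤ 0) (hr' : r' ≤ -r) (hr's : r' < s)
    (hC : 0 ≤ C) (hM : 0 ≤ M) (hx : x ∈ Ioc 0 x₀) (hy : y ∈ Icc (-y₀) y₀)
    (hdiff : ∀ p ∈ Ioc 0 x₀ ×ˢ Icc (-y₀) y₀, HasFDerivAt v (Dv p) p)
    (hfdef : ∀ p ∈ Ioc 0 x₀ ×ˢ Icc (-y₀) y₀,
      f p = (p.1 : ℂ) * Dv p (1, 0) + (r : ℂ) * (p.2 : ℂ) * Dv p (0, 1))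
    (hfc : ContinuousOn f (Ioc 0 x₀ ×ˢ Icc (-y₀) y₀))
    (hvLip : ∀ t ∈ Icc (-y₀) y₀, ‖v (x₀, t) - v (x₀, 0)‖ ≤ M * |t|)
    (hfLip : ∀ ξ ∈ Ioc 0 x₀, ∀ t ∈ Icc (-y₀) y₀, ‖f (ξ, t) - f (ξ, 0)‖ ≤ C * ξ ^ s * |t|) :
    ‖v (x, y) - v (x, 0)‖ ≤ (M * y₀ / x₀ ^ r' + C * y₀ * x₀ ^ (s - r') / (s - r')) * x ^ r' := by
  obtain ⟨hx, hxx₀⟩ := hx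
  have hy₀ : 0 ≤ y₀ := by linarith [hy.1, hy.2]
  have h0 : (0 : ℝ) ∈ Icc (-y₀) y₀ := ⟨neg_nonpos.2 hy₀, hy₀⟩
  have hγ : ∀ ξ ∈ Icc x x₀, |(characteristic r x y ξ).2| ≤ y₀ * (x / ξ) ^ r' := fun ξ hξ =>
    (abs_characteristic_snd_le hx hξ.1 hr').trans (mul_le_mul_of_nonneg_right (abs_le.2 hy)
      (Real.rpow_nonneg (div_pos hx (hx.trans_le hξ.1)).le _))
  have hD : ∀ ξ ∈ Icc x x₀, HasDerivAt (fun ξ => v (characteristic r x y ξ) - v (ξ, 0))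
      (f (characteristic r x y ξ) / ξ - f (ξ, 0) / ξ) ξ := fun ξ hξ => by
    have haxis := hasDerivAt_comp_characteristic_of_transport hr hx hξ h0 hdiff hfdef
    simp only [characteristic_zero] at haxis
    exact (hasDerivAt_comp_characteristic_of_transport hr hx hξ hy hdiff hfdef).sub haxis
  have hD' : ContinuousOn (fun ξ : ℝ => f (characteristic r x y ξ) / ξ - f (ξ, 0) / ξ)
      (Icc x x₀) := by
    have haxis := continuousOn_comp_characteristic_div hr hx h0 hfc
    simp only [characteristic_zero] at haxis
    exact (continuousOn_comp_characteristic_div hr hx hy hfc).sub haxis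
  have hbound : ∀ ξ ∈ Icc x x₀, ‖f (characteristic r x y ξ) / ξ - f (ξ, 0) / ξ‖
      ≤ C * y₀ * x ^ r' * ξ ^ (s - r' - 1) := by
    intro ξ hξ
    have hξ0 : 0 < ξ := hx.trans_le hξ.1
    calc ‖f (characteristic r x y ξ) / ξ - f (ξ, 0) / ξ‖
        = ‖f (ξ, (characteristic r x y ξ).2) - f (ξ, 0)‖ / ξ := by
          rw [← sub_div, norm_div, Complex.norm_real, Real.norm_of_nonneg hξ0.le]; rfl
      _ ≤ C * ξ ^ s * (y₀ * (x / ξ) ^ r') / ξ := by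
          gcongr
          exact (hfLip ξ ⟨hξ0, hξ.2⟩ _ (characteristic_mem hr hx hξ hy).2).trans
            (by gcongr; exact hγ ξ hξ)
      _ = C * y₀ * x ^ r' * ξ ^ (s - r' - 1) := by
          rw [Real.div_rpow hx.le hξ0.le, Real.rpow_sub_one hξ0.ne', Real.rpow_sub hξ0]
          field_simp
  have hx₀ : x₀ ∈ Icc x x₀ := ⟨hxx₀, le_rfl⟩
  calc ‖v (x, y) - v (x, 0)‖
      ≤ ‖v (characteristic r x y x₀) - v (x₀, 0)‖
        + ‖(v (characteristic r x y x₀) - v (x₀, 0))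
          - (v (characteristic r x y x) - v (x, 0))‖ := by
        simpa [characteristic_self hx] using norm_le_norm_add_norm_sub _ _
    _ ≤ M * (y₀ * (x / x₀) ^ r') + C * y₀ * x ^ r' / (s - r') * x₀ ^ (s - r') := by
        gcongr
        · exact (hvLip _ (characteristic_mem hr hx hx₀ hy).2).trans (by gcongr; exact hγ x₀ hx₀)
        · exact norm_sub_le_of_hasDerivAt_of_norm_le_rpow (by positivity) (by linarith) hx hxx₀
            hD hD' hbound
    _ = (M * y₀ / x₀ ^ r' + C * y₀ * x₀ ^ (s - r') / (s - r')) * x ^ r' := by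
        rw [Real.div_rpow hx.le (hx.le.trans hxx₀)]
        ring

/-- `a₀ = v(x₀, 0) + ∫_{x₀}^0 f(ξ, 0) dξ/ξ`; the integral converges since `|f(ξ, 0)| ≤ C ξ^s`. -/
noncomputable def boundaryValue (v f : ℝ × ℝ → ℂ) (x₀ : ℝ) : ℂ :=
  v (x₀, 0) - ∫ ξ in Ioc 0 x₀, f (ξ, 0) / ξ

lemma norm_sub_boundaryValue_le {s C x : ℝ} (hs : 0 < s) (hC : 0 ≤ C) (h0 : (0 : ℝ) ∈ Icc (-y₀) y₀)
    (hdiff : ∀ p ∈ Ioc 0 x₀ ×ˢ Icc (-y₀) y₀, HasFDerivAt v (Dv p) p)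
    (hfdef : ∀ p ∈ Ioc 0 x₀ ×ˢ Icc (-y₀) y₀,
      f p = (p.1 : ℂ) * Dv p (1, 0) + (r : ℂ) * (p.2 : ℂ) * Dv p (0, 1))
    (hfc : ContinuousOn f (Ioc 0 x₀ ×ˢ Icc (-y₀) y₀))
    (hf : ∀ p ∈ Ioc 0 x₀ ×ˢ Icc (-y₀) y₀, ‖f p‖ ≤ C * p.1 ^ s) (hx : x ∈ Ioc 0 x₀) :
    ‖v (x, 0) - boundaryValue v f x₀‖ ≤ C / s * x ^ s := by
  have hmem : ∀ ξ ∈ Ioc 0 x₀, (ξ, (0 : ℝ)) ∈ Ioc 0 x₀ ×ˢ Icc (-y₀) y₀ := fun _ hξ => ⟨hξ, h0⟩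
  refine norm_sub_sub_setIntegral_le_of_norm_le_rpow (g := fun ξ => v (ξ, 0))
    (g' := fun ξ : ℝ => f (ξ, 0) / ξ) hC hs hx (fun ξ hξ => ?_) ?_ fun ξ hξ => ?_
  · refine ((hdiff _ (hmem ξ hξ)).comp_hasDerivAt ξ
      ((hasDerivAt_id' ξ).prodMk (hasDerivAt_const ξ (0 : ℝ)))).congr_deriv ?_
    have hξ0 : (ξ : ℂ) ≠ 0 := by exact_mod_cast hξ.1.ne'
    simp [hfdef _ (hmem ξ hξ), hξ0]
  · exact (hfc.comp (continuousOn_id.prodMk continuousOn_const) hmem).div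
      Complex.continuous_ofReal.continuousOn fun ξ hξ => by exact_mod_cast hξ.1.ne'
  · rw [norm_div, Complex.norm_real, Real.norm_of_nonneg hξ.1.le, Real.rpow_sub_one hξ.1.ne',
      ← mul_div_assoc]
    exact div_le_div_of_nonneg_right (hf _ (hmem ξ hξ)) hξ.1.le

lemma exists_norm_sub_axis_le_rpow {r' s C : ℝ} (hr : r ≤ 0) (hx₀ : 0 < x₀) (hy₀ : 0 ≤ y₀)
    (hr' : r' ≤ -r) (hr's : r' < s) (hC : 0 ≤ C)
    (hdiff : ∀ p ∈ Ioc 0 x₀ ×ˢ Icc (-y₀) y₀, HasFDerivAt v (Dv p) p)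
    (hcont : ContinuousOn Dv (Ioc 0 x₀ ×ˢ Icc (-y₀) y₀))
    (hfdef : ∀ p ∈ Ioc 0 x₀ ×ˢ Icc (-y₀) y₀,
      f p = (p.1 : ℂ) * Dv p (1, 0) + (r : ℂ) * (p.2 : ℂ) * Dv p (0, 1))
    {fy : ℝ × ℝ → ℂ}
    (hfy : ∀ p ∈ Ioc 0 x₀ ×ˢ Icc (-y₀) y₀, HasDerivAt (fun y => f (p.1, y)) (fy p) p.2)
    (hfyb : ∀ p ∈ Ioc 0 x₀ ×ˢ Icc (-y₀) y₀, ‖fy p‖ ≤ C * p.1 ^ s) :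
    ∃ K, 0 ≤ K ∧ ∀ p ∈ Ioc 0 x₀ ×ˢ Icc (-y₀) y₀, ‖v p - v (p.1, 0)‖ ≤ K * p.1 ^ r' := by
  have h0 : (0 : ℝ) ∈ Icc (-y₀) y₀ := ⟨neg_nonpos.2 hy₀, hy₀⟩
  have hx₀U : ∀ t ∈ Icc (-y₀) y₀, (x₀, t) ∈ Ioc 0 x₀ ×ˢ Icc (-y₀) y₀ :=
    fun _ ht => ⟨⟨hx₀, le_rfl⟩, ht⟩
  obtain ⟨M, hM0, hM⟩ := exists_norm_sub_le_mul_abs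
    (fun t ht => (hdiff _ (hx₀U t ht)).comp_hasDerivAt t
      ((hasDerivAt_const t x₀).prodMk (hasDerivAt_id' t)))
    ((hcont.comp (continuousOn_const.prodMk continuousOn_id) hx₀U).clm_apply continuousOn_const)
  have hfLip : ∀ ξ ∈ Ioc 0 x₀, ∀ t ∈ Icc (-y₀) y₀, ‖f (ξ, t) - f (ξ, 0)‖ ≤ C * ξ ^ s * |t| :=
    fun ξ hξ t ht => by
      simpa using (convex_Icc (-y₀) y₀).norm_image_sub_le_of_norm_hasDerivWithin_le
        (f := fun τ => f (ξ, τ)) (f' := fun τ => fy (ξ, τ)) (C := C * ξ ^ s)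
        (fun τ hτ => (hfy (ξ, τ) ⟨hξ, hτ⟩).hasDerivWithinAt) (fun τ hτ => hfyb (ξ, τ) ⟨hξ, hτ⟩)
        h0 ht
  refine ⟨M * y₀ / x₀ ^ r' + C * y₀ * x₀ ^ (s - r') / (s - r'),
    add_nonneg (by positivity) (div_nonneg (by positivity) (sub_nonneg.2 hr's.le)),
    fun p hp => norm_sub_axis_le hr hr' hr's hC hM0 hp.1 hp.2 hdiff hfdef
      (continuousOn_of_eq_transport hcont hfdef) (fun t ht => by simpa using hM 0 h0 t ht) hfLip⟩

end Setting

end SaddleTransport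

open SaddleTransport

/-- part (ii) of the transport lemma at an outgoing saddle. If
`v` is `C¹` on `U = (0,x₀] × [−y₀,y₀]` and `f = x ∂ₓv + r₁ y ∂_y v` satisfies
`|f| ≤ C x^s` and `|∂_y f| ≤ C x^s` with `s > 0`, then there is a constant
`a₀` with `|v − a₀| ≤ C′ x^{r′}` on `U` for every `r′ < min(−r₁, s)`; in
particular `v` extends continuously to `x = 0` with boundary value `a₀`. -/
theorem stmt_15 (r₁ x₀ y₀ : ℝ) (hr : r₁ < 0) (hx : 0 < x₀) (hy : 0 < y₀)
    (v f : ℝ × ℝ → ℂ) (Dv : ℝ × ℝ → (ℝ × ℝ →L[ℝ] ℂ)) (fy : ℝ × ℝ → ℂ)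
    (hdiff : ∀ p ∈ Set.Ioc (0 : ℝ) x₀ ×ˢ Set.Icc (-y₀) y₀, HasFDerivAt v (Dv p) p)
    (hcont : ContinuousOn Dv (Set.Ioc (0 : ℝ) x₀ ×ˢ Set.Icc (-y₀) y₀))
    (hfdef : ∀ p ∈ Set.Ioc (0 : ℝ) x₀ ×ˢ Set.Icc (-y₀) y₀,
      f p = (p.1 : ℂ) * Dv p (1, 0) + (r₁ : ℂ) * (p.2 : ℂ) * Dv p (0, 1))
    (hfy : ∀ p ∈ Set.Ioc (0 : ℝ) x₀ ×ˢ Set.Icc (-y₀) y₀,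
      HasDerivAt (fun y => f (p.1, y)) (fy p) p.2)
    (s : ℝ) (hs : 0 < s) (C : ℝ) (hC : 0 ≤ C)
    (hf : ∀ p ∈ Set.Ioc (0 : ℝ) x₀ ×ˢ Set.Icc (-y₀) y₀, ‖f p‖ ≤ C * p.1 ^ s)
    (hfyb : ∀ p ∈ Set.Ioc (0 : ℝ) x₀ ×ˢ Set.Icc (-y₀) y₀, ‖fy p‖ ≤ C * p.1 ^ s) :
    ∃ a₀ : ℂ,
      (∀ r' : ℝ, r' < min (-r₁) s → ∃ C' : ℝ, 0 ≤ C' ∧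
        ∀ p ∈ Set.Ioc (0 : ℝ) x₀ ×ˢ Set.Icc (-y₀) y₀,
          ‖v p - a₀‖ ≤ C' * p.1 ^ r') ∧
      ∀ y ∈ Set.Icc (-y₀) y₀,
        Filter.Tendsto (fun x => v (x, y)) (nhdsWithin 0 (Set.Ioi 0)) (nhds a₀) := by
  set a₀ := boundaryValue v f x₀
  have haxis : ∀ x ∈ Ioc 0 x₀, ‖v (x, 0) - a₀‖ ≤ C / s * x ^ s :=
    fun x hx => norm_sub_boundaryValue_le hs hC ⟨neg_nonpos.2 hy.le, hy.le⟩ hdiff hfdef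
      (continuousOn_of_eq_transport hcont hfdef) hf hx
  have hrate : ∀ r' < min (-r₁) s, ∃ C' : ℝ, 0 ≤ C' ∧
      ∀ p ∈ Ioc 0 x₀ ×ˢ Icc (-y₀) y₀, ‖v p - a₀‖ ≤ C' * p.1 ^ r' := by
    intro r' hr'
    have hr's : r' < s := hr'.trans_le (min_le_right _ _)
    obtain ⟨K, hK, hoff⟩ := exists_norm_sub_axis_le_rpow hr.le hx hy.le
      (hr'.trans_le (min_le_left _ _)).le hr's hC hdiff hcont hfdef hfy hfyb
    refine ⟨K + C / s * x₀ ^ (s - r'), by positivity, ?_⟩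
    rintro ⟨x, y⟩ hp
    calc ‖v (x, y) - a₀‖ ≤ ‖v (x, y) - v (x, 0)‖ + ‖v (x, 0) - a₀‖ :=
          norm_sub_le_norm_sub_add_norm_sub _ _ _
      _ ≤ K * x ^ r' + C / s * (x₀ ^ (s - r') * x ^ r') := by
        gcongr
        · exact hoff _ hp
        · exact (haxis x hp.1).trans
            (by gcongr; exact rpow_le_rpow_sub_mul_rpow hp.1.1 hp.1.2 hr's.le)
      _ = (K + C / s * x₀ ^ (s - r')) * x ^ r' := by ring
  refine ⟨a₀, hrate, fun y hy => ?_⟩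
  obtain ⟨C', -, hC'⟩ := hrate (min (-r₁) s / 2) (half_lt_self (lt_min (neg_pos.2 hr) hs))
  exact tendsto_nhdsGT_of_norm_sub_le_rpow (half_pos (lt_min (neg_pos.2 hr) hs)) hx
    fun x hx => hC' (x, y) ⟨hx, hy⟩
end

section
/- Let r ∈ (0, 1), x₀ > 0, y₀ > 0, and let a, b, c : [0, x₀] × [−y₀, y₀] → ℝ be continuous with c(0,0) > 0 and a(0,0) ≠ 0. Define the new coordinates x′ = c(x, y)·x and y′ = a(x, y)·y + b(x, y)·x. Then for every M > 0 there exist δ ∈ (0, x₀] and M′ > 0 such that for all (x, y) with 0 < x ≤ δ and |y| ≤ δ: (i) if |y| ≤ M x^r then x′ > 0 and |y′| ≤ M′ (x′)^r; and (ii) if x′ > 0 and |y′| ≤ M (x′)^r then |y| ≤ M′ x^r. In other words, boundedness of y/x^r near the boundary point is independent of the choice of adapted boundary coordinates. -/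
/-- invariance of the condition `|y| ≲ x^r` (0 < r < 1) under a
change of adapted boundary coordinates `x′ = c(x,y)x`, `y′ = a(x,y)y + b(x,y)x`
with `c(0,0) > 0`, `a(0,0) ≠ 0`; hence the inhomogeneous blow-up `[X; o]_r` is
well defined on the level of conormal functions. -/
theorem stmt_17 (r x₀ y₀ : ℝ) (hr0 : 0 < r) (hr1 : r < 1)
    (hx₀ : 0 < x₀) (hy₀ : 0 < y₀)
    (a b c : ℝ × ℝ → ℝ)
    (ha : ContinuousOn a (Set.Icc 0 x₀ ×ˢ Set.Icc (-y₀) y₀))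
    (hb : ContinuousOn b (Set.Icc 0 x₀ ×ˢ Set.Icc (-y₀) y₀))
    (hc : ContinuousOn c (Set.Icc 0 x₀ ×ˢ Set.Icc (-y₀) y₀))
    (hc0 : 0 < c (0, 0)) (ha0 : a (0, 0) ≠ 0) :
    ∀ M > (0 : ℝ), ∃ δ : ℝ, 0 < δ ∧ δ ≤ x₀ ∧ δ ≤ y₀ ∧ ∃ M' : ℝ, 0 < M' ∧
      ∀ x y : ℝ, 0 < x → x ≤ δ → |y| ≤ δ →
        ((|y| ≤ M * x ^ r →
            0 < c (x, y) * x ∧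
            |a (x, y) * y + b (x, y) * x| ≤ M' * (c (x, y) * x) ^ r) ∧
         (0 < c (x, y) * x →
            |a (x, y) * y + b (x, y) * x| ≤ M * (c (x, y) * x) ^ r →
            |y| ≤ M' * x ^ r)) := by
  intro M hM
  set s := Set.Icc (0:ℝ) x₀ ×ˢ Set.Icc (-y₀) y₀ with hs
  have h00 : ((0:ℝ), (0:ℝ)) ∈ s :=
    ⟨⟨le_refl 0, hx₀.le⟩, ⟨neg_nonpos.mpr hy₀.le, hy₀.le⟩⟩
  set a0 : ℝ := |a (0, 0)| with ha0def
  have ha0pos : 0 < a0 := abs_pos.mpr ha0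
  set c0 : ℝ := c (0, 0) with hc0def
  set B : ℝ := |b (0, 0)| + 1 with hBdef
  have hBpos : 0 < B := by positivity
  obtain ⟨δa, hδa, Ha⟩ := Metric.continuousWithinAt_iff.mp
    (ha.continuousWithinAt h00) (a0 / 2) (by positivity)
  obtain ⟨δb, hδb, Hb⟩ := Metric.continuousWithinAt_iff.mp
    (hb.continuousWithinAt h00) 1 one_pos
  obtain ⟨δc, hδc, Hc⟩ := Metric.continuousWithinAt_iff.mp
    (hc.continuousWithinAt h00) (c0 / 2) (by positivity)
  set δ : ℝ := min (min x₀ y₀) (min 1 (min (δa / 2) (min (δb / 2) (δc / 2)))) with hδdef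
  have hδpos : 0 < δ := by positivity
  have hδx₀ : δ ≤ x₀ := le_trans (min_le_left _ _) (min_le_left _ _)
  have hδy₀ : δ ≤ y₀ := le_trans (min_le_left _ _) (min_le_right _ _)
  have hδ1 : δ ≤ 1 := le_trans (min_le_right _ _) (min_le_left _ _)
  have hδδa : δ < δa := lt_of_le_of_lt
    (le_trans (min_le_right _ _) (le_trans (min_le_right _ _) (min_le_left _ _)))
    (by linarith)
  have hδδb : δ < δb := lt_of_le_of_lt
    (le_trans (min_le_right _ _) (le_trans (min_le_right _ _)
      (le_trans (min_le_right _ _) (min_le_left _ _)))) (by linarith)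
  have hδδc : δ < δc := lt_of_le_of_lt
    (le_trans (min_le_right _ _) (le_trans (min_le_right _ _)
      (le_trans (min_le_right _ _) (min_le_right _ _)))) (by linarith)
  refine ⟨δ, hδpos, hδx₀, hδy₀,
    (3 / 2 * a0 * M + B) * (2 / c0) ^ r + 2 / a0 * (M * (3 / 2 * c0) ^ r + B),
    by positivity, ?_⟩
  intro x y hx hxδ hyδ
  have hps : ((x, y) : ℝ × ℝ) ∈ s := by
    refine ⟨⟨hx.le, le_trans hxδ hδx₀⟩, ?_, ?_⟩ <;>
      [skip; skip] <;>
      · have := abs_le.mp (le_trans hyδ hδy₀); simp only []; linarith [this.1, this.2]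
  have hdist : dist ((x, y) : ℝ × ℝ) ((0, 0) : ℝ × ℝ) ≤ δ := by
    rw [Prod.dist_eq]
    simp only [Real.dist_eq, sub_zero]
    exact max_le (by rw [abs_of_pos hx]; exact hxδ) hyδ
  have haest : |a (x, y) - a (0, 0)| < a0 / 2 := by
    have := Ha hps (lt_of_le_of_lt hdist hδδa); rwa [Real.dist_eq] at this
  have hbest : |b (x, y) - b (0, 0)| < 1 := by
    have := Hb hps (lt_of_le_of_lt hdist hδδb); rwa [Real.dist_eq] at this
  have hcest : |c (x, y) - c (0, 0)| < c0 / 2 := by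
    have := Hc hps (lt_of_le_of_lt hdist hδδc); rwa [Real.dist_eq] at this
  have hA : |a (x, y)| ≤ 3 / 2 * a0 := by
    have h1 := abs_le.mp haest.le
    have h2 := abs_le.mp (le_refl a0)
    have := abs_sub_abs_le_abs_sub (a (x, y)) (a (0, 0))
    have := abs_sub_abs_le_abs_sub (a (0, 0)) (a (x, y))
    rw [abs_sub_comm] at this
    linarith
  have hAlow : a0 / 2 ≤ |a (x, y)| := by
    have := abs_sub_abs_le_abs_sub (a (0, 0)) (a (x, y))
    rw [abs_sub_comm] at this
    linarith
  have hBB : |b (x, y)| ≤ B := by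
    have := abs_sub_abs_le_abs_sub (b (x, y)) (b (0, 0))
    linarith
  have hClow : c0 / 2 ≤ c (x, y) := by
    have h1 := abs_le.mp hcest.le
    linarith [h1.1]
  have hChigh : c (x, y) ≤ 3 / 2 * c0 := by
    have h1 := abs_le.mp hcest.le
    linarith [h1.2]
  have hCpos : 0 < c (x, y) := lt_of_lt_of_le (by linarith) hClow
  have hxr : (0:ℝ) < x ^ r := Real.rpow_pos_of_pos hx r
  have hxle1 : x ≤ 1 := le_trans hxδ hδ1
  have hxxr : x ≤ x ^ r := by
    have := Real.rpow_le_rpow_of_exponent_ge hx hxle1 hr1.le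
    rwa [Real.rpow_one] at this
  have hmul : (c (x, y) * x) ^ r = c (x, y) ^ r * x ^ r :=
    Real.mul_rpow hCpos.le hx.le
  constructor
  · intro hyM
    refine ⟨mul_pos hCpos hx, ?_⟩
    have h1 : |a (x, y) * y + b (x, y) * x| ≤ (3 / 2 * a0 * M + B) * x ^ r := by
      calc |a (x, y) * y + b (x, y) * x|
          ≤ |a (x, y)| * |y| + |b (x, y)| * x := by
            refine le_trans (abs_add_le _ _) ?_
            rw [abs_mul, abs_mul, abs_of_pos hx]
        _ ≤ 3 / 2 * a0 * (M * x ^ r) + B * x ^ r := by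
            have t1 : |a (x, y)| * |y| ≤ 3 / 2 * a0 * (M * x ^ r) :=
              mul_le_mul hA hyM (abs_nonneg y) (by positivity)
            have t2 : |b (x, y)| * x ≤ B * x ^ r :=
              mul_le_mul hBB hxxr hx.le hBpos.le
            exact add_le_add t1 t2
        _ = (3 / 2 * a0 * M + B) * x ^ r := by ring
    have h2 : x ^ r ≤ (2 / c0) ^ r * (c (x, y) * x) ^ r := by
      rw [hmul, ← mul_assoc]
      have hcc : (1:ℝ) ≤ (2 / c0) ^ r * c (x, y) ^ r := by
        rw [← Real.mul_rpow (by positivity) hCpos.le]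
        have : (1:ℝ) ≤ 2 / c0 * c (x, y) := by
          rw [div_mul_eq_mul_div, le_div_iff₀ hc0]
          linarith
        calc (1:ℝ) = 1 ^ r := (Real.one_rpow r).symm
          _ ≤ (2 / c0 * c (x, y)) ^ r := Real.rpow_le_rpow zero_le_one this hr0.le
      nlinarith [hxr]
    calc |a (x, y) * y + b (x, y) * x|
        ≤ (3 / 2 * a0 * M + B) * ((2 / c0) ^ r * (c (x, y) * x) ^ r) :=
          le_trans h1 (mul_le_mul_of_nonneg_left h2 (by positivity))
      _ ≤ ((3 / 2 * a0 * M + B) * (2 / c0) ^ r + 2 / a0 * (M * (3 / 2 * c0) ^ r + B))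
            * (c (x, y) * x) ^ r := by
          rw [← mul_assoc]
          have hX : (0:ℝ) ≤ (c (x, y) * x) ^ r := Real.rpow_nonneg (by positivity) r
          have hL : (0:ℝ) ≤ 2 / a0 * (M * (3 / 2 * c0) ^ r + B) := by positivity
          exact mul_le_mul_of_nonneg_right (by linarith) hX
  · intro _ hy'M
    have hkey : |a (x, y)| * |y| ≤ M * (c (x, y) * x) ^ r + B * x := by
      have h1 : |a (x, y) * y| ≤ |a (x, y) * y + b (x, y) * x| + |b (x, y) * x| := by
        have := abs_sub (a (x, y) * y + b (x, y) * x) (b (x, y) * x)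
        simpa using this
      rw [abs_mul, abs_mul, abs_of_pos hx] at h1
      have t2 : |b (x, y)| * x ≤ B * x := mul_le_mul_of_nonneg_right hBB hx.le
      linarith
    have hupper : M * (c (x, y) * x) ^ r + B * x
        ≤ (M * (3 / 2 * c0) ^ r + B) * x ^ r := by
      have h3 : (c (x, y) * x) ^ r ≤ (3 / 2 * c0) ^ r * x ^ r := by
        rw [hmul]
        exact mul_le_mul_of_nonneg_right
          (Real.rpow_le_rpow hCpos.le hChigh hr0.le) hxr.le
      have t1 := mul_le_mul_of_nonneg_left h3 hM.le
      have t2 : B * x ≤ B * x ^ r := mul_le_mul_of_nonneg_left hxxr hBpos.le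
      calc M * (c (x, y) * x) ^ r + B * x
          ≤ M * ((3 / 2 * c0) ^ r * x ^ r) + B * x ^ r := add_le_add t1 t2
        _ = (M * (3 / 2 * c0) ^ r + B) * x ^ r := by ring
    have hy_bound : |y| ≤ 2 / a0 * (M * (3 / 2 * c0) ^ r + B) * x ^ r := by
      have h4 : a0 / 2 * |y| ≤ (M * (3 / 2 * c0) ^ r + B) * x ^ r := by
        calc a0 / 2 * |y| ≤ |a (x, y)| * |y| := mul_le_mul_of_nonneg_right hAlow (abs_nonneg y)
          _ ≤ _ := le_trans hkey hupper
      have := mul_le_mul_of_nonneg_left h4 (le_of_lt (show (0:ℝ) < 2 / a0 by positivity))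
      calc |y| = 2 / a0 * (a0 / 2 * |y|) := by field_simp <;> ring
        _ ≤ 2 / a0 * ((M * (3 / 2 * c0) ^ r + B) * x ^ r) := this
        _ = 2 / a0 * (M * (3 / 2 * c0) ^ r + B) * x ^ r := by ring
    calc |y| ≤ 2 / a0 * (M * (3 / 2 * c0) ^ r + B) * x ^ r := hy_bound
      _ ≤ ((3 / 2 * a0 * M + B) * (2 / c0) ^ r + 2 / a0 * (M * (3 / 2 * c0) ^ r + B))
            * x ^ r := by
          have hpos1 : (0:ℝ) ≤ (3 / 2 * a0 * M + B) * (2 / c0) ^ r := by positivity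
          exact mul_le_mul_of_nonneg_right (by linarith) hxr.le
end
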